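/- arXiv:1802.01965 — 4 statements merged into one kernel-verified Lean document; each statement's English description precedes it below -/
import Mathlib

section
/- The Gibbs function G is infinitely differentiable, and for every τ ∈ ℝ one has G'(τ) = ∫_ℝ r dλ_τ(r), G''(τ) = ∫_ℝ (r − G'(τ))² dλ_τ(r) (the variance of r under λ_τ), and the two-sided bound c₂⁻¹ ≤ G''(τ) ≤ c₁⁻¹. -/
open MeasureTheory Real
open scoped NNReal ENNReal

/-- The Gibbs function `G(τ) = log ∫ exp(τ r - V(r)) dr`. -/
noncomputable def gibbsG (V : ℝ → ℝ) (τ : ℝ) : ℝ :=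
  Real.log (∫ r : ℝ, Real.exp (τ * r - V r))

/-- The Gibbs probability measure `λ_τ` with density `exp(τ r - V(r) - G(τ))`
with respect to Lebesgue measure. -/
noncomputable def gibbsMeasure (V : ℝ → ℝ) (τ : ℝ) : Measure ℝ :=
  (volume : Measure ℝ).withDensity
    (fun r => ENNReal.ofReal (Real.exp (τ * r - V r - gibbsG V τ)))

namespace GibbsAux

noncomputable def Zf (V : ℝ → ℝ) (n : ℕ) (τ : ℝ) : ℝ := ∫ r : ℝ, r ^ n * rexp (τ * r - V r)

variable {V : ℝ → ℝ} {c₁ c₂ : ℝ}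

lemma contDiff_derivV (hV : ContDiff ℝ 2 V) : ContDiff ℝ 1 (deriv V) := by
  have h : ContDiff ℝ ((1 : WithTop ℕ∞) + 1) V := by
    convert hV using 1
    norm_num
  exact (contDiff_succ_iff_deriv.mp h).2.2

lemma diffV (hV : ContDiff ℝ 2 V) : Differentiable ℝ V :=
  hV.differentiable (by norm_num)

lemma diffV' (hV : ContDiff ℝ 2 V) : Differentiable ℝ (deriv V) :=
  (contDiff_derivV hV).differentiable one_ne_zero

lemma contV' (hV : ContDiff ℝ 2 V) : Continuous (deriv V) :=
  (contDiff_derivV hV).continuous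

lemma contV'' (hV : ContDiff ℝ 2 V) : Continuous (deriv (deriv V)) :=
  (contDiff_one_iff_deriv.mp (contDiff_derivV hV)).2

/-- `V' r - c₁ r` is monotone. -/
lemma monoV' (hV : ContDiff ℝ 2 V) (hlow : ∀ r, c₁ ≤ deriv (deriv V) r) :
    Monotone (fun r => deriv V r - c₁ * r) := by
  have h1 : ∀ x, HasDerivAt (fun r => deriv V r - c₁ * r) (deriv (deriv V) x - c₁) x := fun x => by
    exact ((diffV' hV x).hasDerivAt.sub ((hasDerivAt_id' x).const_mul c₁)).congr_deriv (by ring)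
  apply monotone_of_deriv_nonneg (fun x => (h1 x).differentiableAt)
  intro x
  rw [(h1 x).deriv]
  linarith [hlow x]

/-- `c₂ r - V' r` is monotone. -/
lemma monoV'' (hV : ContDiff ℝ 2 V) (hhigh : ∀ r, deriv (deriv V) r ≤ c₂) :
    Monotone (fun r => c₂ * r - deriv V r) := by
  have h1 : ∀ x, HasDerivAt (fun r => c₂ * r - deriv V r) (c₂ - deriv (deriv V) x) x := fun x => by
    exact (((hasDerivAt_id' x).const_mul c₂).sub (diffV' hV x).hasDerivAt).congr_deriv (by ring)
  apply monotone_of_deriv_nonneg (fun x => (h1 x).differentiableAt)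
  intro x
  rw [(h1 x).deriv]
  linarith [hhigh x]

lemma derivV_growth (hc₁ : 0 < c₁) (hV : ContDiff ℝ 2 V)
    (hlow : ∀ r, c₁ ≤ deriv (deriv V) r) (hhigh : ∀ r, deriv (deriv V) r ≤ c₂) (r : ℝ) :
    |deriv V r| ≤ |deriv V 0| + c₂ * |r| := by
  have h₁ := monoV' hV hlow
  have h₂ := monoV'' hV hhigh
  rcases le_total 0 r with hr | hr
  · have a1 := h₁ hr
    have a2 := h₂ hr
    simp only at a1 a2
    rw [abs_of_nonneg hr]
    cases' abs_cases (deriv V r) with h h <;> cases' abs_cases (deriv V 0) with h' h' <;>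
      nlinarith [hc₁]
  · have a1 := h₁ hr
    have a2 := h₂ hr
    simp only at a1 a2
    rw [abs_of_nonpos hr]
    cases' abs_cases (deriv V r) with h h <;> cases' abs_cases (deriv V 0) with h' h' <;>
      nlinarith [hc₁]

/-- quadratic lower bound for `V`. -/
lemma V_lower (hc₁ : 0 < c₁) (hV : ContDiff ℝ 2 V)
    (hlow : ∀ r, c₁ ≤ deriv (deriv V) r) (r : ℝ) :
    V 0 + deriv V 0 * r + c₁ / 2 * r ^ 2 ≤ V r := by
  have h₁ := monoV' hV hlow
  set φ : ℝ → ℝ := fun r => V r - V 0 - deriv V 0 * r - c₁ / 2 * r ^ 2 with hφ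
  have hd : ∀ x, HasDerivAt φ (deriv V x - deriv V 0 - c₁ * x) x := by
    intro x
    have h2 : HasDerivAt (fun r : ℝ => c₁ / 2 * r ^ 2) (c₁ / 2 * (↑2 * x ^ 1)) x :=
      (hasDerivAt_pow 2 x).const_mul (c₁ / 2)
    have h3 : HasDerivAt (fun r : ℝ => deriv V 0 * r) (deriv V 0 * 1) x :=
      (hasDerivAt_id x).const_mul _
    have h4 := (((diffV hV x).hasDerivAt.sub_const (V 0)).sub h3).sub h2
    exact h4.congr_deriv (by push_cast; ring)
  have hder : ∀ x, 0 ≤ x → 0 ≤ deriv V x - deriv V 0 - c₁ * x := by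
    intro x hx
    have := h₁ hx
    simp only at this
    linarith
  have hder' : ∀ x, x ≤ 0 → deriv V x - deriv V 0 - c₁ * x ≤ 0 := by
    intro x hx
    have := h₁ hx
    simp only at this
    linarith
  have hφ0 : φ 0 = 0 := by simp [hφ]
  have key : 0 ≤ φ r := by
    rcases le_total 0 r with hr | hr
    · have hm : MonotoneOn φ (Set.Ici 0) := by
        apply monotoneOn_of_deriv_nonneg (convex_Ici 0)
          (fun x _ => (hd x).continuousAt.continuousWithinAt)
          (fun x hx => (hd x).differentiableAt.differentiableWithinAt)
        intro x hx
        rw [(hd x).deriv]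
        exact hder x (le_of_lt (by simpa using hx))
      have := hm (Set.self_mem_Ici) (by exact hr) hr
      rwa [hφ0] at this
    · have hm : AntitoneOn φ (Set.Iic 0) := by
        apply antitoneOn_of_deriv_nonpos (convex_Iic 0)
          (fun x _ => (hd x).continuousAt.continuousWithinAt)
          (fun x hx => (hd x).differentiableAt.differentiableWithinAt)
        intro x hx
        rw [(hd x).deriv]
        exact hder' x (le_of_lt (by simpa using hx))
      have := hm (by exact hr : r ∈ Set.Iic 0) (Set.self_mem_Iic) hr
      rwa [hφ0] at this
  simp only [hφ] at key
  linarith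

lemma pow_one_add_abs_le (n : ℕ) (x : ℝ) (hx : 0 ≤ x) :
    (1 + x) ^ n ≤ 2 ^ n + 2 ^ n * x ^ n := by
  rcases le_total x 1 with h | h
  · have : (1 + x) ^ n ≤ 2 ^ n := pow_le_pow_left₀ (by linarith) (by linarith) n
    have h2 : (0:ℝ) ≤ 2 ^ n * x ^ n := by positivity
    linarith
  · have : (1 + x) ^ n ≤ (2 * x) ^ n := pow_le_pow_left₀ (by linarith) (by linarith) n
    rw [mul_pow] at this
    have h2 : (0:ℝ) ≤ 2 ^ n := by positivity
    linarith

lemma integrable_weight (hc₁ : 0 < c₁) (hV : ContDiff ℝ 2 V)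
    (hlow : ∀ r, c₁ ≤ deriv (deriv V) r) (n : ℕ) (a : ℝ) :
    Integrable (fun r : ℝ => (1 + |r|) ^ n * rexp (a * |r| - V r)) := by
  set b := |a| + |deriv V 0| with hb
  set K := b ^ 2 / c₁ - V 0 with hK
  have key : ∀ r : ℝ, a * |r| - V r ≤ K - c₁ / 4 * r ^ 2 := by
    intro r
    have h1 := V_lower hc₁ hV hlow r
    have hb1 : a * |r| ≤ |a| * |r| := mul_le_mul_of_nonneg_right (le_abs_self a) (abs_nonneg r)
    have hb2 : -(deriv V 0 * r) ≤ |deriv V 0| * |r| := by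
      calc -(deriv V 0 * r) ≤ |deriv V 0 * r| := neg_le_abs _
        _ = |deriv V 0| * |r| := abs_mul _ _
    have hAM : b * |r| ≤ c₁ / 4 * |r| ^ 2 + b ^ 2 / c₁ := by
      rw [← sub_nonneg]
      have e : c₁ / 4 * |r| ^ 2 + b ^ 2 / c₁ - b * |r| = (c₁ * |r| - 2 * b) ^ 2 / (4 * c₁) := by
        field_simp
        ring_nf
      rw [e]
      positivity
    nlinarith [sq_abs r]
  have cont1 : Continuous (fun r : ℝ => (1 + |r|) ^ n * rexp (a * |r| - V r)) := by
    exact ((continuous_const.add continuous_abs).pow n).mul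
      (Real.continuous_exp.comp ((continuous_const.mul continuous_abs).sub hV.continuous))
  have hintE : Integrable (fun r : ℝ => rexp (-(c₁ / 4) * r ^ 2)) :=
    integrable_exp_neg_mul_sq (by linarith)
  have hintP : Integrable (fun r : ℝ => |r| ^ n * rexp (-(c₁ / 4) * r ^ 2)) := by
    have h0 : Integrable (fun x : ℝ => x ^ (n : ℝ) * rexp (-(c₁ / 4) * x ^ 2)) :=
      integrable_rpow_mul_exp_neg_mul_sq (by linarith)
        (lt_of_lt_of_le neg_one_lt_zero (Nat.cast_nonneg n))
    simp only [Real.rpow_natCast] at h0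
    refine h0.abs.congr (Filter.Eventually.of_forall fun x => ?_)
    simp [abs_mul, abs_pow, abs_of_pos (Real.exp_pos _)]
  have hg : Integrable (fun r : ℝ =>
      rexp K * 2 ^ n * rexp (-(c₁ / 4) * r ^ 2)
        + rexp K * 2 ^ n * (|r| ^ n * rexp (-(c₁ / 4) * r ^ 2))) :=
    (hintE.const_mul _).add (hintP.const_mul _)
  refine hg.mono' cont1.aestronglyMeasurable ?_
  filter_upwards with r
  have hexp : rexp (a * |r| - V r) ≤ rexp K * rexp (-(c₁ / 4) * r ^ 2) := by
    rw [← Real.exp_add]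
    apply Real.exp_le_exp.2
    have := key r
    linarith
  have hpow : (1 + |r|) ^ n ≤ 2 ^ n + 2 ^ n * |r| ^ n := pow_one_add_abs_le n |r| (abs_nonneg r)
  have hnn : (0:ℝ) ≤ (1 + |r|) ^ n := by positivity
  rw [Real.norm_eq_abs, abs_of_nonneg (by positivity)]
  calc (1 + |r|) ^ n * rexp (a * |r| - V r)
      ≤ (2 ^ n + 2 ^ n * |r| ^ n) * (rexp K * rexp (-(c₁ / 4) * r ^ 2)) := by
        apply mul_le_mul hpow hexp (Real.exp_pos _).le (by positivity)
    _ = rexp K * 2 ^ n * rexp (-(c₁ / 4) * r ^ 2)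
        + rexp K * 2 ^ n * (|r| ^ n * rexp (-(c₁ / 4) * r ^ 2)) := by ring

lemma integrable_poly_weight (hc₁ : 0 < c₁) (hV : ContDiff ℝ 2 V)
    (hlow : ∀ r, c₁ ≤ deriv (deriv V) r) {h : ℝ → ℝ} (hcont : Continuous h)
    {n : ℕ} {C : ℝ} (hbd : ∀ r, |h r| ≤ C * (1 + |r|) ^ n) (τ : ℝ) :
    Integrable (fun r : ℝ => h r * rexp (τ * r - V r)) := by
  refine ((integrable_weight hc₁ hV hlow n |τ|).const_mul C).mono' ?_ ?_
  · exact (hcont.mul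
      (Real.continuous_exp.comp
        ((continuous_const.mul continuous_id).sub hV.continuous))).aestronglyMeasurable
  · filter_upwards with r
    rw [Real.norm_eq_abs, abs_mul, abs_of_pos (Real.exp_pos _)]
    have h1 : rexp (τ * r - V r) ≤ rexp (|τ| * |r| - V r) := by
      apply Real.exp_le_exp.2
      have : τ * r ≤ |τ| * |r| := by
        calc τ * r ≤ |τ * r| := le_abs_self _
          _ = |τ| * |r| := abs_mul _ _
      linarith
    calc |h r| * rexp (τ * r - V r) ≤ (C * (1 + |r|) ^ n) * rexp (|τ| * |r| - V r) := by
          apply mul_le_mul (hbd r) h1 (Real.exp_pos _).le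
            (le_trans (abs_nonneg _) (hbd r))
      _ = C * ((1 + |r|) ^ n * rexp (|τ| * |r| - V r)) := by ring

lemma int_pow (hc₁ : 0 < c₁) (hV : ContDiff ℝ 2 V)
    (hlow : ∀ r, c₁ ≤ deriv (deriv V) r) (n : ℕ) (τ : ℝ) :
    Integrable (fun r : ℝ => r ^ n * rexp (τ * r - V r)) := by
  refine integrable_poly_weight hc₁ hV hlow (continuous_pow n) (n := n) (C := 1) ?_ τ
  intro r
  rw [abs_pow, one_mul]
  exact pow_le_pow_left₀ (abs_nonneg r) (by linarith [abs_nonneg r]) n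

lemma int_exp (hc₁ : 0 < c₁) (hV : ContDiff ℝ 2 V)
    (hlow : ∀ r, c₁ ≤ deriv (deriv V) r) (τ : ℝ) :
    Integrable (fun r : ℝ => rexp (τ * r - V r)) := by
  simpa using int_pow hc₁ hV hlow 0 τ

lemma Zpos (hc₁ : 0 < c₁) (hV : ContDiff ℝ 2 V)
    (hlow : ∀ r, c₁ ≤ deriv (deriv V) r) (τ : ℝ) :
    0 < ∫ r : ℝ, rexp (τ * r - V r) :=
  integral_exp_pos (int_exp hc₁ hV hlow τ)

lemma Zf0_eq (τ : ℝ) : Zf V 0 τ = ∫ r : ℝ, rexp (τ * r - V r) := by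
  simp [Zf]

lemma Zf0_pos (hc₁ : 0 < c₁) (hV : ContDiff ℝ 2 V)
    (hlow : ∀ r, c₁ ≤ deriv (deriv V) r) (τ : ℝ) :
    0 < Zf V 0 τ := by
  rw [Zf0_eq]; exact Zpos hc₁ hV hlow τ

lemma hasDeriv_Zf (hc₁ : 0 < c₁) (hV : ContDiff ℝ 2 V)
    (hlow : ∀ r, c₁ ≤ deriv (deriv V) r) (n : ℕ) (τ : ℝ) :
    HasDerivAt (Zf V n) (Zf V (n + 1) τ) τ := by
  have cont : ∀ x : ℝ, ∀ m : ℕ, Continuous (fun r : ℝ => r ^ m * rexp (x * r - V r)) :=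
    fun x m => (continuous_pow m).mul
      (Real.continuous_exp.comp ((continuous_const.mul continuous_id).sub hV.continuous))
  have := hasDerivAt_integral_of_dominated_loc_of_deriv_le (μ := (volume : Measure ℝ))
    (F := fun (x : ℝ) (r : ℝ) => r ^ n * rexp (x * r - V r))
    (F' := fun (x : ℝ) (r : ℝ) => r ^ (n + 1) * rexp (x * r - V r))
    (bound := fun r : ℝ => (1 + |r|) ^ (n + 1) * rexp ((|τ| + 1) * |r| - V r))
    (x₀ := τ) (s := Metric.ball τ 1) (Metric.ball_mem_nhds τ one_pos)
    (Filter.Eventually.of_forall fun x => (cont x n).aestronglyMeasurable)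
    (int_pow hc₁ hV hlow n τ)
    ((cont τ (n + 1)).aestronglyMeasurable)
    ?_ (integrable_weight hc₁ hV hlow (n + 1) (|τ| + 1)) ?_
  · exact this.2
  · filter_upwards with r
    intro x hx
    have hxb : |x| ≤ |τ| + 1 := by
      have := mem_ball_iff_norm.mp hx
      rw [Real.norm_eq_abs] at this
      calc |x| = |τ + (x - τ)| := by ring_nf
        _ ≤ |τ| + |x - τ| := abs_add_le _ _
        _ ≤ |τ| + 1 := by linarith [this.le]
    rw [Real.norm_eq_abs, abs_mul, abs_pow, abs_of_pos (Real.exp_pos _)]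
    have h1 : |r| ^ (n+1) ≤ (1 + |r|) ^ (n+1) :=
      pow_le_pow_left₀ (abs_nonneg r) (by linarith [abs_nonneg r]) _
    have h2 : rexp (x * r - V r) ≤ rexp ((|τ| + 1) * |r| - V r) := by
      apply Real.exp_le_exp.2
      have : x * r ≤ (|τ| + 1) * |r| := by
        calc x * r ≤ |x * r| := le_abs_self _
          _ = |x| * |r| := abs_mul _ _
          _ ≤ (|τ| + 1) * |r| := mul_le_mul_of_nonneg_right hxb (abs_nonneg r)
      linarith
    exact mul_le_mul h1 h2 (Real.exp_pos _).le (by positivity)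
  · filter_upwards with r
    intro x _
    have h1 : HasDerivAt (fun x : ℝ => x * r - V r) r x := by
      simpa using (hasDerivAt_id x).mul_const r |>.sub_const (V r)
    have h2 := h1.exp
    have h3 := h2.const_mul (r ^ n)
    exact h3.congr_deriv (by ring)

lemma gibbsG_eq : gibbsG V = fun τ => Real.log (Zf V 0 τ) := by
  funext τ
  simp [gibbsG, Zf]

lemma hasDeriv_G (hc₁ : 0 < c₁) (hV : ContDiff ℝ 2 V)
    (hlow : ∀ r, c₁ ≤ deriv (deriv V) r) (τ : ℝ) :
    HasDerivAt (gibbsG V) (Zf V 1 τ / Zf V 0 τ) τ := by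
  rw [gibbsG_eq]
  exact (hasDeriv_Zf hc₁ hV hlow 0 τ).log (Zf0_pos hc₁ hV hlow τ).ne'

lemma deriv_G (hc₁ : 0 < c₁) (hV : ContDiff ℝ 2 V)
    (hlow : ∀ r, c₁ ≤ deriv (deriv V) r) :
    deriv (gibbsG V) = fun τ => Zf V 1 τ / Zf V 0 τ :=
  funext fun τ => (hasDeriv_G hc₁ hV hlow τ).deriv

lemma deriv2_G (hc₁ : 0 < c₁) (hV : ContDiff ℝ 2 V)
    (hlow : ∀ r, c₁ ≤ deriv (deriv V) r) (τ : ℝ) :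
    deriv (deriv (gibbsG V)) τ
      = (Zf V 2 τ * Zf V 0 τ - Zf V 1 τ * Zf V 1 τ) / (Zf V 0 τ) ^ 2 := by
  rw [deriv_G hc₁ hV hlow]
  exact (((hasDeriv_Zf hc₁ hV hlow 1 τ).div (hasDeriv_Zf hc₁ hV hlow 0 τ)
    (Zf0_pos hc₁ hV hlow τ).ne')).deriv

lemma analytic_G (hc₁ : 0 < c₁) (hV : ContDiff ℝ 2 V)
    (hlow : ∀ r, c₁ ≤ deriv (deriv V) r) :
    ContDiff ℝ (⊤ : ℕ∞) (gibbsG V) := by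
  set Zc : ℂ → ℂ := fun z => ∫ r : ℝ, Complex.exp (z * r - V r) with hZc
  have contc : ∀ z : ℂ, Continuous (fun r : ℝ => Complex.exp (z * r - V r)) := fun z =>
    Complex.continuous_exp.comp ((continuous_const.mul Complex.continuous_ofReal).sub
      (Complex.continuous_ofReal.comp hV.continuous))
  have hnorm : ∀ (z : ℂ) (r : ℝ), ‖Complex.exp (z * r - V r)‖ = rexp (z.re * r - V r) := by
    intro z r
    rw [Complex.norm_exp]
    congr 1
    simp [Complex.mul_re]
  have hintc : ∀ z : ℂ, Integrable (fun r : ℝ => Complex.exp (z * r - V r)) := by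
    intro z
    refine (int_exp hc₁ hV hlow z.re).mono' (contc z).aestronglyMeasurable ?_
    filter_upwards with r
    rw [hnorm z r]
  have hder : ∀ z₀ : ℂ, HasDerivAt Zc (∫ r : ℝ, (r : ℂ) * Complex.exp (z₀ * r - V r)) z₀ := by
    intro z₀
    have contc' : ∀ z : ℂ, Continuous (fun r : ℝ => (r : ℂ) * Complex.exp (z * r - V r)) :=
      fun z => Complex.continuous_ofReal.mul (contc z)
    have := hasDerivAt_integral_of_dominated_loc_of_deriv_le (μ := (volume : Measure ℝ))
      (F := fun (z : ℂ) (r : ℝ) => Complex.exp (z * r - V r))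
      (F' := fun (z : ℂ) (r : ℝ) => (r : ℂ) * Complex.exp (z * r - V r))
      (bound := fun r : ℝ => (1 + |r|) ^ 1 * rexp ((‖z₀‖ + 1) * |r| - V r))
      (x₀ := z₀) (s := Metric.ball z₀ 1) (Metric.ball_mem_nhds z₀ one_pos)
      (Filter.Eventually.of_forall fun z => (contc z).aestronglyMeasurable)
      (hintc z₀) ((contc' z₀).aestronglyMeasurable)
      ?_ (integrable_weight hc₁ hV hlow 1 (‖z₀‖ + 1)) ?_
    · exact this.2
    · filter_upwards with r
      intro x hx
      have hxb : ‖x‖ ≤ ‖z₀‖ + 1 := by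
        have := mem_ball_iff_norm.mp hx
        calc ‖x‖ = ‖z₀ + (x - z₀)‖ := by ring_nf
          _ ≤ ‖z₀‖ + ‖x - z₀‖ := norm_add_le _ _
          _ ≤ ‖z₀‖ + 1 := by linarith [this.le]
      rw [norm_mul, hnorm x r, Complex.norm_real, Real.norm_eq_abs, pow_one]
      have h2 : rexp (x.re * r - V r) ≤ rexp ((‖z₀‖ + 1) * |r| - V r) := by
        apply Real.exp_le_exp.2
        have : x.re * r ≤ (‖z₀‖ + 1) * |r| := by
          calc x.re * r ≤ |x.re * r| := le_abs_self _
            _ = |x.re| * |r| := abs_mul _ _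
            _ ≤ (‖z₀‖ + 1) * |r| := by
                apply mul_le_mul_of_nonneg_right _ (abs_nonneg r)
                exact le_trans (Complex.abs_re_le_norm x) hxb
        linarith
      calc |r| * rexp (x.re * r - V r) ≤ |r| * rexp ((‖z₀‖ + 1) * |r| - V r) :=
            mul_le_mul_of_nonneg_left h2 (abs_nonneg r)
        _ ≤ (1 + |r|) * rexp ((‖z₀‖ + 1) * |r| - V r) := by
            apply mul_le_mul_of_nonneg_right _ (Real.exp_pos _).le
            linarith [abs_nonneg r]
    · filter_upwards with r
      intro x _
      have h1 : HasDerivAt (fun z : ℂ => z * r - V r) (r : ℂ) x := by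
        simpa using (hasDerivAt_id x).mul_const (r : ℂ) |>.sub_const ((V r : ℂ))
      have h2 := h1.cexp
      exact h2.congr_deriv (by ring)
  have hdiff : Differentiable ℂ Zc := fun z => (hder z).differentiableAt
  have hZcReal : ∀ t : ℝ, Zc t = ((∫ r : ℝ, rexp (t * r - V r) : ℝ) : ℂ) := by
    intro t
    have he : (fun r : ℝ => Complex.exp ((t : ℂ) * r - V r))
        = fun r : ℝ => ((rexp (t * r - V r) : ℝ) : ℂ) := by
      funext r
      rw [Complex.ofReal_exp]
      norm_cast
    show (∫ r : ℝ, Complex.exp ((t : ℂ) * r - V r)) = _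
    rw [he]
    exact integral_ofReal
  have hslit : ∀ t : ℝ, Zc t ∈ Complex.slitPlane := by
    intro t
    rw [hZcReal t]
    exact Complex.ofReal_mem_slitPlane.mpr (Zpos hc₁ hV hlow t)
  have hAN : AnalyticOnNhd ℝ (gibbsG V) Set.univ := by
    intro τ _
    have h1 : AnalyticAt ℝ (fun t : ℝ => ((t : ℂ))) τ := Complex.ofRealCLM.analyticAt τ
    have h2 : AnalyticAt ℂ (fun z : ℂ => Complex.log (Zc z)) ((τ : ℝ) : ℂ) :=
      (hdiff.analyticAt _).clog (hslit τ)
    have h2' : AnalyticAt ℝ (fun z : ℂ => Complex.log (Zc z)) ((τ : ℝ) : ℂ) :=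
      h2.restrictScalars
    have h3 : AnalyticAt ℝ (fun z : ℂ => z.re) (Complex.log (Zc ((τ : ℝ) : ℂ))) :=
      Complex.reCLM.analyticAt _
    have hinner : AnalyticAt ℝ (fun t : ℝ => Complex.log (Zc (t : ℂ))) τ := by
      exact AnalyticAt.comp (g := fun z : ℂ => Complex.log (Zc z))
        (f := fun t : ℝ => (t : ℂ)) h2' h1
    have h5 : AnalyticAt ℝ (fun t : ℝ => (Complex.log (Zc (t : ℂ))).re) τ := by
      exact AnalyticAt.comp (g := fun z : ℂ => z.re)
        (f := fun t : ℝ => Complex.log (Zc (t : ℂ))) h3 hinner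
    apply h5.congr
    filter_upwards with t
    rw [hZcReal t, ← Complex.ofReal_log (Zpos hc₁ hV hlow t).le, Complex.ofReal_re]
    rfl
  exact hAN.contDiff

lemma gibbsG_apply (τ : ℝ) : gibbsG V τ = Real.log (Zf V 0 τ) := by
  simp [gibbsG, Zf]

lemma integral_gibbs (hc₁ : 0 < c₁) (hV : ContDiff ℝ 2 V)
    (hlow : ∀ r, c₁ ≤ deriv (deriv V) r) (τ : ℝ) (g : ℝ → ℝ) :
    ∫ r, g r ∂(gibbsMeasure V τ)
      = (Zf V 0 τ)⁻¹ * ∫ r, g r * rexp (τ * r - V r) := by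
  have hme : Measurable fun r : ℝ => Real.toNNReal (rexp (τ * r - V r - gibbsG V τ)) := by
    apply (continuous_real_toNNReal.comp (Real.continuous_exp.comp
      (((continuous_const.mul continuous_id).sub hV.continuous).sub continuous_const))).measurable
  have h0 : gibbsMeasure V τ = (volume : Measure ℝ).withDensity
      (fun r => ((Real.toNNReal (rexp (τ * r - V r - gibbsG V τ)) : ℝ≥0) : ℝ≥0∞)) := rfl
  rw [h0, integral_withDensity_eq_integral_smul hme g]
  have h1 : ∀ r : ℝ, Real.toNNReal (rexp (τ * r - V r - gibbsG V τ)) • g r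
      = rexp (-(gibbsG V τ)) * (g r * rexp (τ * r - V r)) := by
    intro r
    rw [NNReal.smul_def, Real.coe_toNNReal _ (Real.exp_pos _).le, sub_eq_add_neg, Real.exp_add,
      smul_eq_mul]
    ring
  simp_rw [h1]
  rw [integral_const_mul]
  congr 1
  rw [gibbsG_apply, Real.exp_neg, Real.exp_log (Zf0_pos hc₁ hV hlow τ)]

lemma mean_eq (hc₁ : 0 < c₁) (hV : ContDiff ℝ 2 V)
    (hlow : ∀ r, c₁ ≤ deriv (deriv V) r) (τ : ℝ) :
    ∫ r, r ∂(gibbsMeasure V τ) = Zf V 1 τ / Zf V 0 τ := by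
  rw [integral_gibbs hc₁ hV hlow τ (fun r => r), div_eq_inv_mul]
  congr 1
  simp [Zf]

lemma int_sq_expand (hc₁ : 0 < c₁) (hV : ContDiff ℝ 2 V)
    (hlow : ∀ r, c₁ ≤ deriv (deriv V) r) (τ a : ℝ) :
    ∫ r : ℝ, (r - a) ^ 2 * rexp (τ * r - V r)
      = Zf V 2 τ - 2 * a * Zf V 1 τ + a ^ 2 * Zf V 0 τ := by
  have I0 := int_pow hc₁ hV hlow 0 τ
  have I1 := int_pow hc₁ hV hlow 1 τ
  have I2 := int_pow hc₁ hV hlow 2 τ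
  have he : (fun r : ℝ => (r - a) ^ 2 * rexp (τ * r - V r))
      = fun r : ℝ => r ^ 2 * rexp (τ * r - V r) + ((-(2 * a)) * (r ^ 1 * rexp (τ * r - V r))
          + a ^ 2 * (r ^ 0 * rexp (τ * r - V r))) := by
    funext r
    ring
  have IB : Integrable (fun r : ℝ => -(2 * a) * (r ^ 1 * rexp (τ * r - V r))
      + a ^ 2 * (r ^ 0 * rexp (τ * r - V r))) := (I1.const_mul _).add (I0.const_mul _)
  rw [he, integral_add I2 IB, integral_add (I1.const_mul _) (I0.const_mul _),
    integral_const_mul, integral_const_mul]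
  simp only [Zf]
  ring

lemma hasDeriv_rho (hV : ContDiff ℝ 2 V) (τ r : ℝ) :
    HasDerivAt (fun s : ℝ => rexp (τ * s - V s))
      ((τ - deriv V r) * rexp (τ * r - V r)) r := by
  have h1 : HasDerivAt (fun s : ℝ => τ * s - V s) (τ - deriv V r) r := by
    exact (((hasDerivAt_id' r).const_mul τ).sub (diffV hV r).hasDerivAt).congr_deriv (by ring)
  have h2 := h1.exp
  convert h2 using 1
  ring

lemma abs_sub_le' (r a : ℝ) : |r - a| ≤ |r| + |a| := by
  calc |r - a| = |r + -a| := by rw [sub_eq_add_neg]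
    _ ≤ |r| + |-a| := abs_add_le _ _
    _ = |r| + |a| := by rw [abs_neg]

lemma ibp_b (hc₁ : 0 < c₁) (hV : ContDiff ℝ 2 V)
    (hlow : ∀ r, c₁ ≤ deriv (deriv V) r) (hhigh : ∀ r, deriv (deriv V) r ≤ c₂)
    (τ a : ℝ) :
    ∫ r : ℝ, (r - a) * (deriv V r - τ) * rexp (τ * r - V r) = Zf V 0 τ := by
  have hc₂ : 0 < c₂ := lt_of_lt_of_le hc₁ ((hlow 0).trans (hhigh 0))
  have hVg := derivV_growth hc₁ hV hlow hhigh
  have hqbound : ∀ r : ℝ, |(r - a) * (τ - deriv V r)|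
      ≤ ((1 + |a|) * (|τ| + |deriv V 0| + c₂)) * (1 + |r|) ^ 2 := by
    intro r
    rw [abs_mul]
    have h1 : |r - a| ≤ (1 + |a|) * (1 + |r|) := by
      have := abs_sub_le' r a
      nlinarith [abs_nonneg r, abs_nonneg a]
    have h2 : |τ - deriv V r| ≤ (|τ| + |deriv V 0| + c₂) * (1 + |r|) := by
      have := abs_sub_le' τ (deriv V r)
      have := hVg r
      nlinarith [abs_nonneg r, abs_nonneg τ, abs_nonneg (deriv V 0), hc₂]
    calc |r - a| * |τ - deriv V r|
        ≤ ((1 + |a|) * (1 + |r|)) * ((|τ| + |deriv V 0| + c₂) * (1 + |r|)) := by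
          apply mul_le_mul h1 h2 (abs_nonneg _) (by positivity)
      _ = ((1 + |a|) * (|τ| + |deriv V 0| + c₂)) * (1 + |r|) ^ 2 := by ring
  have hq_cont : Continuous fun r : ℝ => (r - a) * (τ - deriv V r) :=
    ((continuous_id.sub continuous_const : Continuous fun r : ℝ => r - a)).mul
      (continuous_const.sub (contV' hV))
  have hint_q : Integrable fun r : ℝ => ((r - a) * (τ - deriv V r)) * rexp (τ * r - V r) :=
    integrable_poly_weight hc₁ hV hlow (h := fun r => (r - a) * (τ - deriv V r))
      hq_cont hqbound τ
  have hint_f : Integrable fun r : ℝ => (r - a) * rexp (τ * r - V r) := by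
    refine integrable_poly_weight hc₁ hV hlow (h := fun r => r - a)
      (continuous_id.sub continuous_const : Continuous fun r : ℝ => r - a)
      (n := 1) (C := 1 + |a|) (fun r => ?_) τ
    have := abs_sub_le' r a
    nlinarith [abs_nonneg r, abs_nonneg a]
  have hint_f' : Integrable fun r : ℝ =>
      (1 + (r - a) * (τ - deriv V r)) * rexp (τ * r - V r) := by
    have he : (fun r : ℝ => rexp (τ * r - V r)
        + ((r - a) * (τ - deriv V r)) * rexp (τ * r - V r))
        = fun r : ℝ => (1 + (r - a) * (τ - deriv V r)) * rexp (τ * r - V r) := by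
      funext r
      ring
    exact he ▸ ((int_exp hc₁ hV hlow τ).add hint_q)
  have hf : ∀ r : ℝ, HasDerivAt (fun s : ℝ => (s - a) * rexp (τ * s - V s))
      ((1 + (r - a) * (τ - deriv V r)) * rexp (τ * r - V r)) r := by
    intro r
    have hid : HasDerivAt (fun y : ℝ => y - a) 1 r := by
      simpa using (hasDerivAt_id r).sub_const a
    have h1 := hid.mul (hasDeriv_rho hV τ r)
    exact h1.congr_deriv (by ring)
  have hzero := integral_eq_zero_of_hasDerivAt_of_integrable hf hint_f' hint_f
  have hsplit : ∫ r : ℝ, (1 + (r - a) * (τ - deriv V r)) * rexp (τ * r - V r)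
      = (∫ r : ℝ, rexp (τ * r - V r))
        + ∫ r : ℝ, ((r - a) * (τ - deriv V r)) * rexp (τ * r - V r) := by
    rw [← integral_add (int_exp hc₁ hV hlow τ) hint_q]
    congr 1
    funext r
    ring
  have hneg : ∫ r : ℝ, (r - a) * (deriv V r - τ) * rexp (τ * r - V r)
      = - ∫ r : ℝ, ((r - a) * (τ - deriv V r)) * rexp (τ * r - V r) := by
    rw [← integral_neg]
    congr 1
    funext r
    ring
  rw [Zf0_eq, hneg]
  rw [hsplit] at hzero
  linarith

lemma ibp_c (hc₁ : 0 < c₁) (hV : ContDiff ℝ 2 V)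
    (hlow : ∀ r, c₁ ≤ deriv (deriv V) r) (hhigh : ∀ r, deriv (deriv V) r ≤ c₂)
    (τ : ℝ) :
    ∫ r : ℝ, (deriv V r - τ) ^ 2 * rexp (τ * r - V r)
      = ∫ r : ℝ, deriv (deriv V) r * rexp (τ * r - V r) := by
  have hc₂ : 0 < c₂ := lt_of_lt_of_le hc₁ ((hlow 0).trans (hhigh 0))
  have hVg := derivV_growth hc₁ hV hlow hhigh
  have hlin : ∀ r : ℝ, |deriv V r - τ| ≤ (|τ| + |deriv V 0| + c₂) * (1 + |r|) := by
    intro r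
    have := abs_sub_le' (deriv V r) τ
    have := hVg r
    nlinarith [abs_nonneg r, abs_nonneg τ, abs_nonneg (deriv V 0), hc₂]
  have hint_f : Integrable fun r : ℝ => (deriv V r - τ) * rexp (τ * r - V r) := by
    refine integrable_poly_weight hc₁ hV hlow ((contV' hV).sub continuous_const)
      (n := 1) (C := |τ| + |deriv V 0| + c₂) (fun r => ?_) τ
    simpa [pow_one] using hlin r
  have hint_sq : Integrable fun r : ℝ => (deriv V r - τ) ^ 2 * rexp (τ * r - V r) := by
    refine integrable_poly_weight hc₁ hV hlow (((contV' hV).sub continuous_const).pow 2)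
      (n := 2) (C := (|τ| + |deriv V 0| + c₂) ^ 2) (fun r => ?_) τ
    rw [Pi.pow_apply, Pi.sub_apply, abs_pow, ← mul_pow]
    exact pow_le_pow_left₀ (abs_nonneg _) (hlin r) 2
  have hint_V'' : Integrable fun r : ℝ => deriv (deriv V) r * rexp (τ * r - V r) := by
    refine integrable_poly_weight hc₁ hV hlow (contV'' hV)
      (n := 0) (C := c₂) (fun r => ?_) τ
    rw [pow_zero, mul_one]
    exact abs_le.2 ⟨by linarith [hlow r], hhigh r⟩
  have hint_f' : Integrable fun r : ℝ =>
      (deriv (deriv V) r - (deriv V r - τ) ^ 2) * rexp (τ * r - V r) := by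
    have he : (fun r : ℝ => deriv (deriv V) r * rexp (τ * r - V r)
        - (deriv V r - τ) ^ 2 * rexp (τ * r - V r))
        = fun r : ℝ => (deriv (deriv V) r - (deriv V r - τ) ^ 2) * rexp (τ * r - V r) := by
      funext r
      ring
    exact he ▸ (hint_V''.sub hint_sq)
  have hf : ∀ r : ℝ, HasDerivAt (fun s : ℝ => (deriv V s - τ) * rexp (τ * s - V s))
      ((deriv (deriv V) r - (deriv V r - τ) ^ 2) * rexp (τ * r - V r)) r := by
    intro r
    have h1 := ((diffV' hV r).hasDerivAt.sub_const τ).mul (hasDeriv_rho hV τ r)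
    exact h1.congr_deriv (by ring)
  have hzero := integral_eq_zero_of_hasDerivAt_of_integrable hf hint_f' hint_f
  have hsplit : ∫ r : ℝ, (deriv (deriv V) r - (deriv V r - τ) ^ 2) * rexp (τ * r - V r)
      = (∫ r : ℝ, deriv (deriv V) r * rexp (τ * r - V r))
        - ∫ r : ℝ, (deriv V r - τ) ^ 2 * rexp (τ * r - V r) := by
    rw [← integral_sub hint_V'' hint_sq]
    congr 1
    funext r
    ring
  rw [hsplit] at hzero
  linarith

lemma exists_root (hc₁ : 0 < c₁) (hV : ContDiff ℝ 2 V)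
    (hlow : ∀ r, c₁ ≤ deriv (deriv V) r) (τ : ℝ) :
    ∃ r₀ : ℝ, deriv V r₀ = τ := by
  have h₁ := monoV' hV hlow
  set s := (τ - deriv V 0) / c₁ with hs
  have hcs : c₁ * s = τ - deriv V 0 := by
    rw [hs]; field_simp
  have h1 : deriv V (min 0 s) ≤ τ := by
    have hm : min 0 s ≤ 0 := min_le_left _ _
    have hh := h₁ hm
    simp only at hh
    have hm2 : min 0 s ≤ s := min_le_right _ _
    nlinarith [hc₁]
  have h2 : τ ≤ deriv V (max 0 s) := by
    have hm : (0:ℝ) ≤ max 0 s := le_max_left _ _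
    have hh := h₁ hm
    simp only at hh
    have hm2 : s ≤ max 0 s := le_max_right _ _
    nlinarith [hc₁]
  have hle : min 0 s ≤ max 0 s := le_trans (min_le_left _ _) (le_max_left _ _)
  have := intermediate_value_Icc hle ((contV' hV).continuousOn)
  obtain ⟨r₀, _, hr₀⟩ := this ⟨h1, h2⟩
  exact ⟨r₀, hr₀⟩

lemma strong_mono (hc₁ : 0 < c₁) (hV : ContDiff ℝ 2 V)
    (hlow : ∀ r, c₁ ≤ deriv (deriv V) r) {τ r₀ : ℝ} (hr₀ : deriv V r₀ = τ) (r : ℝ) :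
    c₁ * (r - r₀) ^ 2 ≤ (r - r₀) * (deriv V r - τ) := by
  have h₁ := monoV' hV hlow
  rcases le_total r₀ r with h | h
  · have hh := h₁ h
    simp only at hh
    nlinarith
  · have hh := h₁ h
    simp only at hh
    nlinarith

lemma int_prod (hc₁ : 0 < c₁) (hV : ContDiff ℝ 2 V)
    (hlow : ∀ r, c₁ ≤ deriv (deriv V) r) (hhigh : ∀ r, deriv (deriv V) r ≤ c₂)
    (τ a : ℝ) :
    Integrable fun r : ℝ => (r - a) * (deriv V r - τ) * rexp (τ * r - V r) := by
  have hc₂ : 0 < c₂ := lt_of_lt_of_le hc₁ ((hlow 0).trans (hhigh 0))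
  have hVg := derivV_growth hc₁ hV hlow hhigh
  refine integrable_poly_weight hc₁ hV hlow (h := fun r => (r - a) * (deriv V r - τ))
    (((continuous_id.sub continuous_const : Continuous fun r : ℝ => r - a)).mul
      ((contV' hV).sub continuous_const))
    (n := 2) (C := (1 + |a|) * (|τ| + |deriv V 0| + c₂)) (fun r => ?_) τ
  rw [abs_mul]
  have h1 : |r - a| ≤ (1 + |a|) * (1 + |r|) := by
    have := abs_sub_le' r a
    nlinarith [abs_nonneg r, abs_nonneg a]
  have h2 : |deriv V r - τ| ≤ (|τ| + |deriv V 0| + c₂) * (1 + |r|) := by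
    have := abs_sub_le' (deriv V r) τ
    have := hVg r
    nlinarith [abs_nonneg r, abs_nonneg τ, abs_nonneg (deriv V 0), hc₂]
  calc |r - a| * |deriv V r - τ|
      ≤ ((1 + |a|) * (1 + |r|)) * ((|τ| + |deriv V 0| + c₂) * (1 + |r|)) := by
        apply mul_le_mul h1 h2 (abs_nonneg _) (by positivity)
    _ = ((1 + |a|) * (|τ| + |deriv V 0| + c₂)) * (1 + |r|) ^ 2 := by ring

lemma int_sqm (hc₁ : 0 < c₁) (hV : ContDiff ℝ 2 V)
    (hlow : ∀ r, c₁ ≤ deriv (deriv V) r) (τ a : ℝ) :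
    Integrable fun r : ℝ => (r - a) ^ 2 * rexp (τ * r - V r) := by
  refine integrable_poly_weight hc₁ hV hlow (h := fun r => (r - a) ^ 2)
    ((continuous_id.sub continuous_const : Continuous fun r : ℝ => r - a).pow 2)
    (n := 2) (C := (1 + |a|) ^ 2) (fun r => ?_) τ
  rw [abs_pow, ← mul_pow]
  apply pow_le_pow_left₀ (abs_nonneg _)
  have := abs_sub_le' r a
  nlinarith [abs_nonneg r, abs_nonneg a]

lemma int_dsq (hc₁ : 0 < c₁) (hV : ContDiff ℝ 2 V)
    (hlow : ∀ r, c₁ ≤ deriv (deriv V) r) (hhigh : ∀ r, deriv (deriv V) r ≤ c₂)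
    (τ : ℝ) :
    Integrable fun r : ℝ => (deriv V r - τ) ^ 2 * rexp (τ * r - V r) := by
  have hc₂ : 0 < c₂ := lt_of_lt_of_le hc₁ ((hlow 0).trans (hhigh 0))
  have hVg := derivV_growth hc₁ hV hlow hhigh
  refine integrable_poly_weight hc₁ hV hlow (((contV' hV).sub continuous_const).pow 2)
    (n := 2) (C := (|τ| + |deriv V 0| + c₂) ^ 2) (fun r => ?_) τ
  rw [Pi.pow_apply, Pi.sub_apply, abs_pow, ← mul_pow]
  apply pow_le_pow_left₀ (abs_nonneg _)
  have := abs_sub_le' (deriv V r) τ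
  have := hVg r
  nlinarith [abs_nonneg r, abs_nonneg τ, abs_nonneg (deriv V 0), hc₂]

lemma int_V2 (hc₁ : 0 < c₁) (hV : ContDiff ℝ 2 V)
    (hlow : ∀ r, c₁ ≤ deriv (deriv V) r) (hhigh : ∀ r, deriv (deriv V) r ≤ c₂)
    (τ : ℝ) :
    Integrable fun r : ℝ => deriv (deriv V) r * rexp (τ * r - V r) := by
  have hc₂ : 0 < c₂ := lt_of_lt_of_le hc₁ ((hlow 0).trans (hhigh 0))
  refine integrable_poly_weight hc₁ hV hlow (contV'' hV)
    (n := 0) (C := c₂) (fun r => ?_) τ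
  rw [pow_zero, mul_one]
  exact abs_le.2 ⟨by linarith [hlow r], hhigh r⟩

end GibbsAux

/-- `G` is infinitely differentiable, `G'(τ)` is the mean of `r` under `λ_τ`,
`G''(τ)` is the variance of `r` under `λ_τ`, and `c₂⁻¹ ≤ G''(τ) ≤ c₁⁻¹`. -/
theorem gibbsG_smooth_deriv_and_variance_bounds
    (V : ℝ → ℝ) (c₁ c₂ : ℝ) (hc₁ : 0 < c₁)
    (hV : ContDiff ℝ 2 V)
    (hlow : ∀ r : ℝ, c₁ ≤ deriv (deriv V) r)
    (hhigh : ∀ r : ℝ, deriv (deriv V) r ≤ c₂) :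
    ContDiff ℝ (⊤ : ℕ∞) (gibbsG V) ∧
    ∀ τ : ℝ,
      deriv (gibbsG V) τ = (∫ r : ℝ, r ∂(gibbsMeasure V τ)) ∧
      deriv (deriv (gibbsG V)) τ
        = (∫ r : ℝ, (r - deriv (gibbsG V) τ) ^ 2 ∂(gibbsMeasure V τ)) ∧
      c₂⁻¹ ≤ deriv (deriv (gibbsG V)) τ ∧
      deriv (deriv (gibbsG V)) τ ≤ c₁⁻¹ := by
  have hc₂ : 0 < c₂ := lt_of_lt_of_le hc₁ ((hlow 0).trans (hhigh 0))
  refine ⟨GibbsAux.analytic_G hc₁ hV hlow, fun τ => ?_⟩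
  have hZ0 : 0 < GibbsAux.Zf V 0 τ := GibbsAux.Zf0_pos hc₁ hV hlow τ
  have hd1 : deriv (gibbsG V) τ = GibbsAux.Zf V 1 τ / GibbsAux.Zf V 0 τ :=
    congrFun (GibbsAux.deriv_G hc₁ hV hlow) τ
  have hmean : deriv (gibbsG V) τ = ∫ r : ℝ, r ∂(gibbsMeasure V τ) := by
    rw [hd1, GibbsAux.mean_eq hc₁ hV hlow τ]
  -- notation
  have hSval := GibbsAux.int_sq_expand hc₁ hV hlow τ (GibbsAux.Zf V 1 τ / GibbsAux.Zf V 0 τ)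
  have hG2 : deriv (deriv (gibbsG V)) τ
      = (∫ r : ℝ, (r - GibbsAux.Zf V 1 τ / GibbsAux.Zf V 0 τ) ^ 2 * rexp (τ * r - V r))
        / GibbsAux.Zf V 0 τ := by
    rw [GibbsAux.deriv2_G hc₁ hV hlow τ, hSval]
    field_simp
    ring
  have hvar : deriv (deriv (gibbsG V)) τ
      = ∫ r : ℝ, (r - deriv (gibbsG V) τ) ^ 2 ∂(gibbsMeasure V τ) := by
    simp only [hd1]
    rw [GibbsAux.integral_gibbs hc₁ hV hlow τ
      (fun r => (r - GibbsAux.Zf V 1 τ / GibbsAux.Zf V 0 τ) ^ 2), hG2, div_eq_inv_mul]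
  -- the variance bounds
  have hZ1m : GibbsAux.Zf V 1 τ
      = GibbsAux.Zf V 1 τ / GibbsAux.Zf V 0 τ * GibbsAux.Zf V 0 τ :=
    (div_mul_cancel₀ _ hZ0.ne').symm
  -- lower bound
  have hlow_bound : c₂⁻¹ ≤ deriv (deriv (gibbsG V)) τ := by
    set m : ℝ := GibbsAux.Zf V 1 τ / GibbsAux.Zf V 0 τ with hmdef
    have hpt : ∀ r : ℝ, 2 * ((r - m) * (deriv V r - τ) * rexp (τ * r - V r))
        ≤ c₂ * ((r - m) ^ 2 * rexp (τ * r - V r))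
          + c₂⁻¹ * ((deriv V r - τ) ^ 2 * rexp (τ * r - V r)) := by
      intro r
      have hB : 0 ≤ c₂ * (r - m) ^ 2 + c₂⁻¹ * (deriv V r - τ) ^ 2
          - 2 * ((r - m) * (deriv V r - τ)) := by
        have h1 : c₂ * (c₂ * (r - m) ^ 2 + c₂⁻¹ * (deriv V r - τ) ^ 2
            - 2 * ((r - m) * (deriv V r - τ)))
            = (c₂ * (r - m) - (deriv V r - τ)) ^ 2 := by
          field_simp
          ring
        nlinarith [sq_nonneg (c₂ * (r - m) - (deriv V r - τ)), hc₂]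
      nlinarith [mul_nonneg hB (Real.exp_pos (τ * r - V r)).le]
    have hsum : Integrable (fun r : ℝ => c₂ * ((r - m) ^ 2 * rexp (τ * r - V r))
        + c₂⁻¹ * ((deriv V r - τ) ^ 2 * rexp (τ * r - V r))) :=
      ((GibbsAux.int_sqm hc₁ hV hlow τ m).const_mul c₂).add
        ((GibbsAux.int_dsq hc₁ hV hlow hhigh τ).const_mul c₂⁻¹)
    have hIl := integral_mono
      ((GibbsAux.int_prod hc₁ hV hlow hhigh τ m).const_mul 2) hsum hpt
    rw [integral_const_mul, integral_add
        ((GibbsAux.int_sqm hc₁ hV hlow τ m).const_mul c₂)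
        ((GibbsAux.int_dsq hc₁ hV hlow hhigh τ).const_mul c₂⁻¹),
      integral_const_mul, integral_const_mul,
      GibbsAux.ibp_b hc₁ hV hlow hhigh τ m,
      GibbsAux.ibp_c hc₁ hV hlow hhigh τ] at hIl
    have hVE : ∫ r : ℝ, deriv (deriv V) r * rexp (τ * r - V r)
        ≤ c₂ * GibbsAux.Zf V 0 τ := by
      have h := integral_mono (GibbsAux.int_V2 hc₁ hV hlow hhigh τ)
        ((GibbsAux.int_exp hc₁ hV hlow τ).const_mul c₂)
        (fun r => mul_le_mul_of_nonneg_right (hhigh r) (Real.exp_pos _).le)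
      rwa [integral_const_mul, ← GibbsAux.Zf0_eq] at h
    have hZS : GibbsAux.Zf V 0 τ
        ≤ c₂ * ∫ r : ℝ, (r - m) ^ 2 * rexp (τ * r - V r) := by
      have h2 : c₂⁻¹ * (∫ r : ℝ, deriv (deriv V) r * rexp (τ * r - V r))
          ≤ c₂⁻¹ * (c₂ * GibbsAux.Zf V 0 τ) :=
        mul_le_mul_of_nonneg_left hVE (inv_nonneg.2 hc₂.le)
      rw [← mul_assoc, inv_mul_cancel₀ hc₂.ne', one_mul] at h2
      linarith
    rw [hG2, le_div_iff₀ hZ0]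
    have h3 : c₂⁻¹ * GibbsAux.Zf V 0 τ
        ≤ c₂⁻¹ * (c₂ * ∫ r : ℝ, (r - m) ^ 2 * rexp (τ * r - V r)) :=
      mul_le_mul_of_nonneg_left hZS (inv_nonneg.2 hc₂.le)
    rwa [← mul_assoc, inv_mul_cancel₀ hc₂.ne', one_mul] at h3
  -- upper bound
  have hup_bound : deriv (deriv (gibbsG V)) τ ≤ c₁⁻¹ := by
    set m : ℝ := GibbsAux.Zf V 1 τ / GibbsAux.Zf V 0 τ with hmdef
    obtain ⟨r₀, hr₀⟩ := GibbsAux.exists_root hc₁ hV hlow τ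
    have hpt2 : ∀ r : ℝ, c₁ * ((r - r₀) ^ 2 * rexp (τ * r - V r))
        ≤ (r - r₀) * (deriv V r - τ) * rexp (τ * r - V r) := by
      intro r
      nlinarith [mul_le_mul_of_nonneg_right (GibbsAux.strong_mono hc₁ hV hlow hr₀ r)
        (Real.exp_pos (τ * r - V r)).le]
    have hIu := integral_mono ((GibbsAux.int_sqm hc₁ hV hlow τ r₀).const_mul c₁)
      (GibbsAux.int_prod hc₁ hV hlow hhigh τ r₀) hpt2
    rw [integral_const_mul, GibbsAux.ibp_b hc₁ hV hlow hhigh τ r₀] at hIu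
    have hcomp : (∫ r : ℝ, (r - m) ^ 2 * rexp (τ * r - V r))
        ≤ ∫ r : ℝ, (r - r₀) ^ 2 * rexp (τ * r - V r) := by
      rw [hSval, GibbsAux.int_sq_expand hc₁ hV hlow τ r₀, hZ1m]
      nlinarith [mul_nonneg hZ0.le (sq_nonneg (m - r₀))]
    have hfin : c₁ * (∫ r : ℝ, (r - m) ^ 2 * rexp (τ * r - V r)) ≤ GibbsAux.Zf V 0 τ := by
      have := mul_le_mul_of_nonneg_left hcomp hc₁.le
      linarith
    rw [hG2, div_le_iff₀ hZ0]
    have h3 : c₁⁻¹ * (c₁ * (∫ r : ℝ, (r - m) ^ 2 * rexp (τ * r - V r)))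
        ≤ c₁⁻¹ * GibbsAux.Zf V 0 τ :=
      mul_le_mul_of_nonneg_left hfin (inv_nonneg.2 hc₁.le)
    rw [← mul_assoc, inv_mul_cancel₀ hc₁.ne', one_mul] at h3
    linarith [h3]
  exact ⟨hmean, hvar, hlow_bound, hup_bound⟩
end

section
/- For all α ∈ ℝ and τ ∈ ℝ, the exponential moment of V' under the Gibbs measure satisfies ∫_ℝ exp(α V'(r)) dλ_τ(r) ≤ exp(α τ + (c₂/2) α²). -/
/-!
Taylor's bound `V (r - α) ≤ V r - α V' r + c₂ α² / 2` gives
`exp (α V' r - V r) ≤ exp (c₂ α² / 2 - V (r - α))`. Integrating against `exp (τ r - G τ)` and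
substituting `r ↦ r + α` turns the right-hand side into `exp (α τ + c₂ α² / 2)` times the total
mass of `λ_τ`, which is `1` because `V'' ≥ c₁ > 0` makes `∫ exp (τ r - V r) dr` finite.
-/

open MeasureTheory Real

lemma ConvexOn.add_deriv_mul_sub_le {S : Set ℝ} {f : ℝ → ℝ} {x y : ℝ} (hfc : ConvexOn ℝ S f)
    (hx : x ∈ S) (hy : y ∈ S) (hfd : DifferentiableAt ℝ f x) :
    f x + deriv f x * (y - x) ≤ f y := by
  rcases lt_trichotomy x y with hxy | rfl | hxy
  · have h := hfc.deriv_le_slope hx hy hxy hfd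
    rw [slope_def_field, le_div_iff₀ (sub_pos.2 hxy)] at h
    linarith
  · simp
  · have h := hfc.slope_le_deriv hy hx hxy hfd
    rw [slope_def_field, div_le_iff₀ (sub_pos.2 hxy)] at h
    linarith

section QuadraticTaylor

variable {f : ℝ → ℝ} {c : ℝ}

-- `f - c/2 · id²` is convex, and its tangent line at `x` is the quadratic lower bound.
lemma add_deriv_mul_add_sq_le_of_le_deriv2 (hf : Differentiable ℝ f)
    (hf' : Differentiable ℝ (deriv f)) (h : ∀ r, c ≤ deriv (deriv f) r) (x y : ℝ) :
    f x + deriv f x * (y - x) + c / 2 * (y - x) ^ 2 ≤ f y := by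
  set g : ℝ → ℝ := fun s => f s - c / 2 * s ^ 2
  have hg : ∀ s, HasDerivAt g (deriv f s - c * s) s := fun s =>
    ((hf s).hasDerivAt.sub ((hasDerivAt_pow 2 s).const_mul (c / 2))).congr_deriv (by ring)
  have hg' : deriv g = fun s => deriv f s - c * s := funext fun s => (hg s).deriv
  have hg'' : ∀ s, HasDerivAt (deriv g) (deriv (deriv f) s - c) s := fun s => by
    rw [hg']
    exact ((hf' s).hasDerivAt.sub ((hasDerivAt_id' s).const_mul c)).congr_deriv (by ring)
  have hconv : ConvexOn ℝ Set.univ g :=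
    convexOn_univ_of_deriv2_nonneg (fun s => (hg s).differentiableAt)
      (fun s => (hg'' s).differentiableAt)
      (fun s => by simpa [(hg'' s).deriv] using h s)
  have := hconv.add_deriv_mul_sub_le (Set.mem_univ x) (Set.mem_univ y) (hg x).differentiableAt
  rw [hg'] at this
  linear_combination this

lemma le_add_deriv_mul_add_sq_of_deriv2_le (hf : Differentiable ℝ f)
    (hf' : Differentiable ℝ (deriv f)) (h : ∀ r, deriv (deriv f) r ≤ c) (x y : ℝ) :
    f y ≤ f x + deriv f x * (y - x) + c / 2 * (y - x) ^ 2 := by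
  have := add_deriv_mul_add_sq_le_of_le_deriv2 (f := -f) (c := -c) hf.neg
    (by simpa [deriv.neg'] using hf'.neg) (fun r => by simpa [deriv.neg'] using h r) x y
  simp only [deriv.neg', Pi.neg_apply] at this
  linarith

end QuadraticTaylor

lemma integrable_exp_mul_sub_of_le_deriv2 {V : ℝ → ℝ} {c : ℝ} (hc : 0 < c)
    (hV : Differentiable ℝ V) (hV' : Differentiable ℝ (deriv V))
    (hlow : ∀ r, c ≤ deriv (deriv V) r) (τ : ℝ) :
    Integrable (fun r => exp (τ * r - V r)) := by
  set b := τ - deriv V 0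
  -- completing the square: `b r - c r² / 2 ≤ b² / c - c r² / 4`
  have hbound : ∀ r, τ * r - V r ≤ (b ^ 2 / c - V 0) + -(c / 4) * r ^ 2 := fun r => by
    have hV_ge := add_deriv_mul_add_sq_le_of_le_deriv2 hV hV' hlow 0 r
    have hsq : b * r - c / 2 * r ^ 2 ≤ b ^ 2 / c - c / 4 * r ^ 2 := by
      rw [← sub_nonneg]
      have hdiff :
          b ^ 2 / c - c / 4 * r ^ 2 - (b * r - c / 2 * r ^ 2) = (b - c / 2 * r) ^ 2 / c := by
        field_simp
        ring
      exact hdiff ▸ by positivity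
    simp only [sub_zero] at hV_ge
    linarith
  refine ((integrable_exp_neg_mul_sq (by positivity : 0 < c / 4)).const_mul
    (exp (b ^ 2 / c - V 0))).mono' (by have := hV.continuous; fun_prop) (.of_forall fun r => ?_)
  rw [norm_of_nonneg (exp_nonneg _), ← exp_add]
  exact exp_le_exp.2 (hbound r)

lemma exp_gibbsG {V : ℝ → ℝ} {τ : ℝ} (h : Integrable (fun r => exp (τ * r - V r))) :
    exp (gibbsG V τ) = ∫ r, exp (τ * r - V r) :=
  exp_log (integral_exp_pos h)

lemma integral_gibbsMeasure {V : ℝ → ℝ} (hV : Measurable V) (τ : ℝ) (f : ℝ → ℝ) :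
    ∫ r, f r ∂gibbsMeasure V τ = ∫ r, exp (τ * r - V r - gibbsG V τ) * f r := by
  rw [gibbsMeasure, integral_withDensity_eq_integral_toReal_smul (by fun_prop)
    (.of_forall fun _ => ENNReal.ofReal_lt_top)]
  simp only [ENNReal.toReal_ofReal (exp_nonneg _), smul_eq_mul]

/-- for all `α, τ ∈ ℝ`, the exponential moment of `V'` under the Gibbs
measure satisfies `∫ exp(α V'(r)) dλ_τ(r) ≤ exp(α τ + (c₂/2) α²)`. -/
theorem gibbs_expMoment_of_Vprime_le
    (V : ℝ → ℝ) (c₁ c₂ : ℝ) (hc₁ : 0 < c₁)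
    (hV : ContDiff ℝ 2 V)
    (hlow : ∀ r : ℝ, c₁ ≤ deriv (deriv V) r)
    (hhigh : ∀ r : ℝ, deriv (deriv V) r ≤ c₂) :
    ∀ α τ : ℝ,
      (∫ r : ℝ, Real.exp (α * deriv V r) ∂(gibbsMeasure V τ))
        ≤ Real.exp (α * τ + c₂ / 2 * α ^ 2) := by
  intro α τ
  have hV₁ : Differentiable ℝ V := hV.differentiable two_ne_zero
  have hV₂ : Differentiable ℝ (deriv V) := (hV.deriv' (n := 1)).differentiable one_ne_zero
  have hZ := integrable_exp_mul_sub_of_le_deriv2 hc₁ hV₁ hV₂ hlow τ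
  set G := gibbsG V τ
  set C := exp (α * τ + c₂ / 2 * α ^ 2 - G)
  have hpoint : ∀ r, exp (τ * r - V r - G) * exp (α * deriv V r) ≤
      C * exp (τ * (r - α) - V (r - α)) := fun r => by
    have := le_add_deriv_mul_add_sq_of_deriv2_le hV₁ hV₂ hhigh r (r - α)
    rw [← exp_add, ← exp_add]
    exact exp_le_exp.2 (by linarith)
  calc ∫ r, exp (α * deriv V r) ∂gibbsMeasure V τ
      = ∫ r, exp (τ * r - V r - G) * exp (α * deriv V r) :=
        integral_gibbsMeasure hV₁.continuous.measurable τ _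
    _ ≤ ∫ r, C * exp (τ * (r - α) - V (r - α)) :=
        integral_mono_of_nonneg (.of_forall fun r => by positivity)
          ((hZ.comp_sub_right α).const_mul C) (.of_forall hpoint)
    _ = C * exp G := by
        rw [integral_const_mul, integral_sub_right_eq_self (fun r => exp (τ * r - V r)) α,
          exp_gibbsG hZ]
    _ = exp (α * τ + c₂ / 2 * α ^ 2) := by rw [← exp_add, sub_add_cancel]
end

section
/- For every ρ ∈ ℝ one has τ̂(ρ) > (1−κ) ρ and τ̂(ρ) > ρ; equivalently, for every τ ∈ ℝ, writing ρ(τ) = G'(τ) for the mean of r under the Gibbs measure λ_τ, one has τ > (1−κ) ρ(τ) and τ > ρ(τ). -/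
open MeasureTheory Real Filter Set Topology

noncomputable def freeF (V : ℝ → ℝ) (ρ : ℝ) : ℝ :=
  ⨆ τ : ℝ, (τ * ρ - gibbsG V τ)

noncomputable def tension (V : ℝ → ℝ) : ℝ → ℝ :=
  deriv (freeF V)

noncomputable def anharmonicV (κ : ℝ) (r : ℝ) : ℝ :=
  (1 - κ) / 2 * r ^ 2 + κ / 2 * r * max r 0

/-!
Integration by parts against the Gibbs weight `exp (τ r - V r)` gives `τ = ⟨V'⟩_τ`, and here
`V' r = (1 - κ) r + κ max r 0`. Since `κ max r 0 ≥ 0` and `κ (max r 0 - r) ≥ 0`, both strictly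
on a half-line, `τ - (1 - κ) ρ(τ)` and `τ - ρ(τ)` are integrals of positive functions. The
derivative of `ρ = G'` is a variance, hence positive, and `ρ(τ) ≥ τ - C` for `τ ≥ 0`, so `G'` is
an increasing bijection of `ℝ`; the Legendre transform `F` is then differentiable with `F'` the
inverse of `G'`, which turns the inequalities in `τ` into the inequalities in `ρ`.
-/

lemma integral_pos_of_pos_on {α : Type*} [MeasurableSpace α] {μ : Measure α} {f : α → ℝ}
    {s : Set α} (hf : 0 ≤ f) (hfi : Integrable f μ) (hs : μ s ≠ 0) (hpos : ∀ x ∈ s, 0 < f x) :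
    0 < ∫ x, f x ∂μ :=
  (integral_pos_iff_support_of_nonneg hf hfi).2 <| pos_iff_ne_zero.2 fun h =>
    hs (measure_mono_null (fun x hx => (hpos x hx).ne') h)

section Legendre

variable {G g : ℝ → ℝ}

lemma add_mul_sub_le_of_hasDerivAt (hG : ∀ x, HasDerivAt G (g x) x) (hg : Monotone g)
    (x y : ℝ) : G x + g x * (y - x) ≤ G y := by
  have hcont : ∀ a b, ContinuousOn G (Icc a b) := fun a b z _ =>
    (hG z).continuousAt.continuousWithinAt
  rcases lt_trichotomy x y with hxy | rfl | hxy
  · obtain ⟨c, hc, hslope⟩ := exists_hasDerivAt_eq_slope G g hxy (hcont x y) fun z _ => hG z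
    have : g c * (y - x) = G y - G x := by
      rw [hslope, div_mul_cancel₀ _ (sub_ne_zero.2 hxy.ne')]
    nlinarith [hg hc.1.le]
  · simp
  · obtain ⟨c, hc, hslope⟩ := exists_hasDerivAt_eq_slope G g hxy (hcont y x) fun z _ => hG z
    have : g c * (x - y) = G x - G y := by
      rw [hslope, div_mul_cancel₀ _ (sub_ne_zero.2 hxy.ne')]
    nlinarith [hg hc.2.le]

lemma mul_sub_le_of_hasDerivAt (hG : ∀ x, HasDerivAt G (g x) x) (hg : Monotone g)
    {τ ρ : ℝ} (hτ : g τ = ρ) (σ : ℝ) : σ * ρ - G σ ≤ τ * ρ - G τ := by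
  have := add_mul_sub_le_of_hasDerivAt hG hg τ σ
  rw [hτ] at this
  linarith

lemma iSup_mul_sub_eq (hG : ∀ x, HasDerivAt G (g x) x) (hg : Monotone g) {τ ρ : ℝ}
    (hτ : g τ = ρ) : ⨆ σ, (σ * ρ - G σ) = τ * ρ - G τ :=
  le_antisymm (ciSup_le (mul_sub_le_of_hasDerivAt hG hg hτ))
    (le_ciSup ⟨_, forall_mem_range.2 (mul_sub_le_of_hasDerivAt hG hg hτ)⟩ τ)

lemma hasDerivAt_iSup_mul_sub (hG : ∀ x, HasDerivAt G (g x) x) (hg : StrictMono g)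
    (hsurj : Function.Surjective g) {τ ρ : ℝ} (hτ : g τ = ρ) :
    HasDerivAt (fun ρ => ⨆ σ, (σ * ρ - G σ)) τ ρ := by
  let e := hg.orderIsoOfSurjective g hsurj
  have he : ∀ ρ', g (e.symm ρ') = ρ' := e.apply_symm_apply
  have hτe : e.symm ρ = τ := by rw [← hτ]; exact e.symm_apply_apply τ
  rw [hasDerivAt_iff_isLittleO, Asymptotics.isLittleO_iff]
  intro ε hε
  filter_upwards [e.symm.continuous.continuousAt.eventually_mem
    (Metric.closedBall_mem_nhds (e.symm ρ) hε)] with ρ' hρ'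
  rw [Metric.mem_closedBall, Real.dist_eq, hτe] at hρ'
  simp only [iSup_mul_sub_eq hG hg.monotone hτ, iSup_mul_sub_eq hG hg.monotone (he ρ'),
    smul_eq_mul, Real.norm_eq_abs]
  -- the increment lies between the slopes `τ` and `e.symm ρ'` times `ρ' - ρ`
  have hlow := mul_sub_le_of_hasDerivAt hG hg.monotone (he ρ') τ
  have hup := mul_sub_le_of_hasDerivAt hG hg.monotone hτ (e.symm ρ')
  calc |e.symm ρ' * ρ' - G (e.symm ρ') - (τ * ρ - G τ) - (ρ' - ρ) * τ|
      ≤ |(e.symm ρ' - τ) * (ρ' - ρ)| := by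
        rw [abs_of_nonneg (by linarith)]
        exact le_abs.2 (Or.inl (by linarith))
    _ ≤ ε * |ρ' - ρ| := by
        rw [abs_mul]
        exact mul_le_mul_of_nonneg_right hρ' (abs_nonneg _)

end Legendre

noncomputable def gibbsMoment (V : ℝ → ℝ) (n : ℕ) (τ : ℝ) : ℝ :=
  ∫ r, r ^ n * exp (τ * r - V r)

noncomputable def gibbsMean (V : ℝ → ℝ) (τ : ℝ) : ℝ :=
  gibbsMoment V 1 τ / gibbsMoment V 0 τ

lemma gibbsMoment_zero (V : ℝ → ℝ) (τ : ℝ) :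
    gibbsMoment V 0 τ = ∫ r, exp (τ * r - V r) := by
  simp only [gibbsMoment, pow_zero, one_mul]

structure IsConfining (V : ℝ → ℝ) (c : ℝ) : Prop where
  continuous : Continuous V
  pos : 0 < c
  mul_sq_le : ∀ r, c * r ^ 2 ≤ V r

namespace IsConfining

variable {V V' : ℝ → ℝ} {c : ℝ} (hV : IsConfining V c)
include hV

lemma norm_pow_mul_exp_le (n : ℕ) {B τ : ℝ} (hτ : |τ| ≤ B) (r : ℝ) :
    ‖r ^ n * exp (τ * r - V r)‖ ≤
      n.factorial * exp ((B + 1) ^ 2 / (2 * c)) * exp (-(c / 2) * r ^ 2) := by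
  have hc := hV.pos
  have hpow : |r| ^ n ≤ n.factorial * exp |r| := by
    have := pow_div_factorial_le_exp _ (abs_nonneg r) n
    rwa [div_le_iff₀ (by positivity), mul_comm] at this
  have hexp : |r| + (τ * r - V r) ≤ (B + 1) ^ 2 / (2 * c) + -(c / 2) * r ^ 2 := by
    have h1 : τ * r ≤ B * |r| :=
      (le_abs_self _).trans (by rw [abs_mul]; exact mul_le_mul_of_nonneg_right hτ (abs_nonneg r))
    -- AM-GM: `(B + 1) |r| ≤ (B + 1)² / (2c) + c r² / 2`
    have h2 : (B + 1) * |r| ≤ (B + 1) ^ 2 / (2 * c) + c / 2 * r ^ 2 := by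
      rw [← sq_abs r, div_add' _ _ _ (by positivity), le_div_iff₀ (by positivity)]
      nlinarith [sq_nonneg (c * |r| - (B + 1))]
    nlinarith [hV.mul_sq_le r]
  calc ‖r ^ n * exp (τ * r - V r)‖ = |r| ^ n * exp (τ * r - V r) := by
        rw [norm_mul, norm_pow, Real.norm_eq_abs, Real.norm_of_nonneg (exp_pos _).le]
    _ ≤ n.factorial * exp |r| * exp (τ * r - V r) := by gcongr
    _ = n.factorial * exp (|r| + (τ * r - V r)) := by rw [exp_add, mul_assoc]
    _ ≤ n.factorial * exp ((B + 1) ^ 2 / (2 * c) + -(c / 2) * r ^ 2) := by gcongr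
    _ = _ := by rw [exp_add, mul_assoc]

lemma integrable_pow_mul_exp (n : ℕ) (τ : ℝ) :
    Integrable fun r => r ^ n * exp (τ * r - V r) :=
  ((integrable_exp_neg_mul_sq (half_pos hV.pos)).const_mul _).mono'
    (Continuous.aestronglyMeasurable (by have := hV.continuous; fun_prop))
    (Eventually.of_forall (hV.norm_pow_mul_exp_le n le_rfl))

lemma integrable_exp (τ : ℝ) : Integrable fun r => exp (τ * r - V r) := by
  simpa only [pow_zero, one_mul] using hV.integrable_pow_mul_exp 0 τ

lemma hasDerivAt_gibbsMoment (n : ℕ) (τ : ℝ) :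
    HasDerivAt (gibbsMoment V n) (gibbsMoment V (n + 1) τ) τ := by
  have hderiv : ∀ r σ, HasDerivAt (fun σ => r ^ n * exp (σ * r - V r))
      (r ^ (n + 1) * exp (σ * r - V r)) σ := fun r σ =>
    (((hasDerivAt_mul_const r).sub_const (V r)).exp.const_mul (r ^ n)).congr_deriv (by ring)
  have hball : ∀ σ ∈ Metric.ball τ 1, |σ| ≤ |τ| + 1 := fun σ hσ => by
    rw [Metric.mem_ball, Real.dist_eq] at hσ
    linarith [abs_sub_abs_le_abs_sub σ τ]
  exact (hasDerivAt_integral_of_dominated_loc_of_deriv_le (Metric.ball_mem_nhds τ one_pos)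
    (Eventually.of_forall fun σ => (hV.integrable_pow_mul_exp n σ).aestronglyMeasurable)
    (hV.integrable_pow_mul_exp n τ) (hV.integrable_pow_mul_exp (n + 1) τ).aestronglyMeasurable
    (Eventually.of_forall fun r σ hσ => hV.norm_pow_mul_exp_le (n + 1) (hball σ hσ) r)
    ((integrable_exp_neg_mul_sq (half_pos hV.pos)).const_mul _)
    (Eventually.of_forall fun r σ _ => hderiv r σ)).2

lemma gibbsMoment_zero_pos (τ : ℝ) : 0 < gibbsMoment V 0 τ := by
  rw [gibbsMoment_zero]
  exact integral_exp_pos (hV.integrable_exp τ)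

lemma hasDerivAt_gibbsG (τ : ℝ) : HasDerivAt (gibbsG V) (gibbsMean V τ) τ := by
  have hG : gibbsG V = fun σ => log (gibbsMoment V 0 σ) :=
    funext fun σ => by rw [gibbsMoment_zero, gibbsG]
  rw [hG]
  exact (hV.hasDerivAt_gibbsMoment 0 τ).log (hV.gibbsMoment_zero_pos τ).ne'

lemma sq_gibbsMoment_one_lt (τ : ℝ) :
    gibbsMoment V 1 τ ^ 2 < gibbsMoment V 2 τ * gibbsMoment V 0 τ := by
  set Z := gibbsMoment V 0 τ
  set M := gibbsMoment V 1 τ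
  set Q := gibbsMoment V 2 τ
  have hZ : 0 < Z := hV.gibbsMoment_zero_pos τ
  have hexpand : (fun r => (Z * r - M) ^ 2 * exp (τ * r - V r)) = fun r =>
      Z ^ 2 * (r ^ 2 * exp (τ * r - V r)) - 2 * Z * M * (r ^ 1 * exp (τ * r - V r)) +
        M ^ 2 * (r ^ 0 * exp (τ * r - V r)) := by
    funext r; ring
  have hI := hV.integrable_pow_mul_exp (τ := τ)
  have hI21 : Integrable fun r => Z ^ 2 * (r ^ 2 * exp (τ * r - V r)) -
      2 * Z * M * (r ^ 1 * exp (τ * r - V r)) := ((hI 2).const_mul _).sub ((hI 1).const_mul _)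
  have hint : Integrable fun r => (Z * r - M) ^ 2 * exp (τ * r - V r) := by
    rw [hexpand]
    exact hI21.add ((hI 0).const_mul _)
  -- `∫ (Z r - M)² exp (τ r - V r) = Z (Q Z - M²)`, and the integrand is positive for `r > M / Z`
  have hpos := integral_pos_of_pos_on (s := Ioi (M / Z)) (fun r => by positivity) hint
    (by simp) fun r hr => by
      rw [mem_Ioi, div_lt_iff₀ hZ] at hr
      exact mul_pos (pow_pos (by linarith) 2) (exp_pos _)
  rw [hexpand, integral_add hI21 ((hI 0).const_mul _),
    integral_sub ((hI 2).const_mul _) ((hI 1).const_mul _), integral_const_mul,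
    integral_const_mul, integral_const_mul] at hpos
  change 0 < Z ^ 2 * Q - 2 * Z * M * M + M ^ 2 * Z at hpos
  nlinarith

lemma hasDerivAt_gibbsMean (τ : ℝ) :
    HasDerivAt (gibbsMean V)
      ((gibbsMoment V 2 τ * gibbsMoment V 0 τ - gibbsMoment V 1 τ * gibbsMoment V 1 τ) /
        gibbsMoment V 0 τ ^ 2) τ :=
  (hV.hasDerivAt_gibbsMoment 1 τ).div (hV.hasDerivAt_gibbsMoment 0 τ)
    (hV.gibbsMoment_zero_pos τ).ne'

lemma strictMono_gibbsMean : StrictMono (gibbsMean V) :=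
  strictMono_of_hasDerivAt_pos hV.hasDerivAt_gibbsMean fun τ =>
    div_pos (by nlinarith [hV.sq_gibbsMoment_one_lt τ]) (pow_pos (hV.gibbsMoment_zero_pos τ) 2)

lemma continuous_gibbsMean : Continuous (gibbsMean V) :=
  continuous_iff_continuousAt.2 fun τ => (hV.hasDerivAt_gibbsMean τ).continuousAt

lemma integral_deriv_mul_exp (hV' : ∀ r, HasDerivAt V (V' r) r) (τ : ℝ)
    (hint : Integrable fun r => V' r * exp (τ * r - V r)) :
    ∫ r, V' r * exp (τ * r - V r) = τ * gibbsMoment V 0 τ := by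
  have hw := hV.integrable_exp τ
  have hderiv : ∀ r, HasDerivAt (fun r => exp (τ * r - V r))
      (τ * exp (τ * r - V r) - V' r * exp (τ * r - V r)) r := fun r =>
    (((hasDerivAt_id r).const_mul τ).sub (hV' r)).exp.congr_deriv
      (by simp only [Pi.sub_apply, id, mul_one]; ring)
  have h := integral_eq_zero_of_hasDerivAt_of_integrable hderiv ((hw.const_mul τ).sub hint) hw
  rw [integral_sub (hw.const_mul τ) hint, integral_const_mul] at h
  rw [gibbsMoment_zero]
  linarith

lemma integrable_sub_mul_mul_exp {τ : ℝ} (hint : Integrable fun r => V' r * exp (τ * r - V r))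
    (a : ℝ) : Integrable fun r => (V' r - a * r) * exp (τ * r - V r) :=
  (hint.sub ((hV.integrable_pow_mul_exp 1 τ).const_mul a)).congr
    (Eventually.of_forall fun r => by simp only [Pi.sub_apply, pow_one]; ring)

lemma sub_mul_gibbsMean (hV' : ∀ r, HasDerivAt V (V' r) r) {τ : ℝ}
    (hint : Integrable fun r => V' r * exp (τ * r - V r)) (a : ℝ) :
    τ - a * gibbsMean V τ =
      (∫ r, (V' r - a * r) * exp (τ * r - V r)) / gibbsMoment V 0 τ := by
  have hsplit : ∫ r, (V' r - a * r) * exp (τ * r - V r) =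
      τ * gibbsMoment V 0 τ - a * gibbsMoment V 1 τ := by
    rw [← hV.integral_deriv_mul_exp hV' τ hint, gibbsMoment, ← integral_const_mul,
      ← integral_sub hint ((hV.integrable_pow_mul_exp 1 τ).const_mul a)]
    congr 1; funext r; ring
  have hZ := (hV.gibbsMoment_zero_pos τ).ne'
  rw [hsplit, gibbsMean]
  field_simp

lemma mul_gibbsMean_lt (hV' : ∀ r, HasDerivAt V (V' r) r) {τ : ℝ}
    (hint : Integrable fun r => V' r * exp (τ * r - V r)) {a : ℝ} {s : Set ℝ}
    (hs : volume s ≠ 0) (hle : ∀ r, a * r ≤ V' r) (hlt : ∀ r ∈ s, a * r < V' r) :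
    a * gibbsMean V τ < τ := by
  rw [← sub_pos, hV.sub_mul_gibbsMean hV' hint]
  refine div_pos (integral_pos_of_pos_on (fun r => ?_) (hV.integrable_sub_mul_mul_exp hint a)
    hs fun r hr => ?_) (hV.gibbsMoment_zero_pos τ)
  · exact mul_nonneg (sub_nonneg.2 (hle r)) (exp_pos _).le
  · exact mul_pos (sub_pos.2 (hlt r hr)) (exp_pos _)

end IsConfining

section Anharmonic

variable {κ : ℝ}

lemma anharmonicV_eq (κ r : ℝ) :
    anharmonicV κ r = (1 - κ) / 2 * r ^ 2 + κ / 2 * max r 0 ^ 2 := by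
  rcases le_total r 0 with h | h
  · rw [anharmonicV, max_eq_right h]; ring
  · rw [anharmonicV, max_eq_left h]; ring

lemma isConfining_anharmonicV (hκ0 : 0 ≤ κ) (hκ1 : κ < 1) :
    IsConfining (anharmonicV κ) ((1 - κ) / 2) where
  continuous := by unfold anharmonicV; fun_prop
  pos := by linarith
  mul_sq_le r := by
    rw [anharmonicV_eq]
    linarith [mul_nonneg hκ0 (sq_nonneg (max r 0))]

lemma hasDerivAt_max_zero_sq (r : ℝ) : HasDerivAt (fun x : ℝ => max x 0 ^ 2) (2 * max r 0) r := by
  refine hasDerivAt_of_hasDerivAt_of_ne' (g := fun x => 2 * max x 0) (x := 0) (fun y hy => ?_)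
    (by fun_prop) (by fun_prop) r
  rcases hy.lt_or_gt with hy | hy
  · have : (fun x : ℝ => max x 0 ^ 2) =ᶠ[𝓝 y] fun _ => 0 := by
      filter_upwards [Iio_mem_nhds hy] with x hx
      simp [max_eq_right (mem_Iio.1 hx).le]
    simpa [hy.le] using (hasDerivAt_const y (0 : ℝ)).congr_of_eventuallyEq this
  · have : (fun x : ℝ => max x 0 ^ 2) =ᶠ[𝓝 y] fun x => x ^ 2 := by
      filter_upwards [Ioi_mem_nhds hy] with x hx
      rw [max_eq_left (mem_Ioi.1 hx).le]
    simpa [hy.le] using (hasDerivAt_pow 2 y).congr_of_eventuallyEq this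

lemma hasDerivAt_anharmonicV (κ r : ℝ) :
    HasDerivAt (anharmonicV κ) ((1 - κ) * r + κ * max r 0) r := by
  rw [show anharmonicV κ = fun x => (1 - κ) / 2 * x ^ 2 + κ / 2 * max x 0 ^ 2 from
    funext (anharmonicV_eq κ)]
  exact (((hasDerivAt_pow 2 r).const_mul ((1 - κ) / 2)).add
    ((hasDerivAt_max_zero_sq r).const_mul (κ / 2))).congr_deriv (by push_cast; ring)

lemma integrable_deriv_anharmonicV_mul_exp (hκ0 : 0 ≤ κ) (hκ1 : κ < 1) (τ : ℝ) :
    Integrable fun r => ((1 - κ) * r + κ * max r 0) * exp (τ * r - anharmonicV κ r) := by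
  have hV := isConfining_anharmonicV hκ0 hκ1
  refine (hV.integrable_pow_mul_exp 1 τ).norm.mono'
    (Continuous.aestronglyMeasurable (by have := hV.continuous; fun_prop))
    (Eventually.of_forall fun r => ?_)
  rw [norm_mul, norm_mul, pow_one]
  gcongr
  rw [Real.norm_eq_abs, Real.norm_eq_abs, abs_le]
  rcases le_total r 0 with h | h
  · rw [max_eq_right h, abs_of_nonpos h]
    constructor <;> nlinarith
  · rw [max_eq_left h, abs_of_nonneg h]
    constructor <;> linarith

lemma mul_gibbsMean_anharmonicV_lt (hκ0 : 0 < κ) (hκ1 : κ < 1) (τ : ℝ) :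
    (1 - κ) * gibbsMean (anharmonicV κ) τ < τ ∧ gibbsMean (anharmonicV κ) τ < τ := by
  have hV := isConfining_anharmonicV hκ0.le hκ1
  have hint := integrable_deriv_anharmonicV_mul_exp hκ0.le hκ1 τ
  constructor
  · refine hV.mul_gibbsMean_lt (hasDerivAt_anharmonicV κ) hint (s := Ioi 0) (by simp)
      (fun r => ?_) fun r hr => ?_
    · nlinarith [le_max_right r 0]
    · rw [max_eq_left (le_of_lt hr)]
      nlinarith [mem_Ioi.1 hr]
  · simpa using hV.mul_gibbsMean_lt (hasDerivAt_anharmonicV κ) hint (a := 1) (s := Iio 0)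
      (by simp) (fun r => by nlinarith [le_max_left r 0]) fun r hr => by
        rw [max_eq_right (le_of_lt hr)]
        nlinarith [mem_Iio.1 hr]

lemma exists_sub_le_gibbsMean_anharmonicV (hκ0 : 0 < κ) (hκ1 : κ < 1) :
    ∃ C, ∀ τ, 0 ≤ τ → τ - C ≤ gibbsMean (anharmonicV κ) τ := by
  have hV := isConfining_anharmonicV hκ0.le hκ1
  set V := anharmonicV κ
  let N τ := ∫ r, ((1 - κ) * r + κ * max r 0 - 1 * r) * exp (τ * r - V r)
  let Zpos := ∫ r in Ioi 0, exp (0 * r - V r)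
  have hNint τ :=
    hV.integrable_sub_mul_mul_exp (integrable_deriv_anharmonicV_mul_exp hκ0.le hκ1 τ) 1
  refine ⟨N 0 / Zpos, fun τ hτ => ?_⟩
  -- the integrand of `N` vanishes on `r ≥ 0`, and on `r < 0` the weight decreases in `τ ≥ 0`
  have hN : N τ ≤ N 0 := integral_mono (hNint τ) (hNint 0) fun r => by
    rcases le_total r 0 with h | h
    · refine mul_le_mul_of_nonneg_left (exp_le_exp.2 ?_) ?_
      · nlinarith
      · rw [max_eq_right h]; nlinarith
    · have : (1 - κ) * r + κ * max r 0 - 1 * r = 0 := by rw [max_eq_left h]; ring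
      rw [this, zero_mul, zero_mul]
  have hN0 : 0 ≤ N 0 := integral_nonneg fun r => mul_nonneg (by nlinarith [le_max_left r 0])
    (exp_pos _).le
  have hZpos : 0 < Zpos := by
    have : NeZero (volume.restrict (Ioi (0 : ℝ))) := ⟨by simp⟩
    exact integral_exp_pos (hV.integrable_exp 0).integrableOn
  have hZ : Zpos ≤ gibbsMoment V 0 τ := by
    rw [gibbsMoment_zero]
    refine (setIntegral_mono_on (hV.integrable_exp 0).integrableOn
      (hV.integrable_exp τ).integrableOn measurableSet_Ioi fun r hr => exp_le_exp.2 ?_).trans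
      (setIntegral_le_integral (hV.integrable_exp τ) (Eventually.of_forall fun r => (exp_pos _).le))
    nlinarith [mem_Ioi.1 hr]
  have h := hV.sub_mul_gibbsMean (hasDerivAt_anharmonicV κ)
    (integrable_deriv_anharmonicV_mul_exp hκ0.le hκ1 τ) 1
  rw [one_mul] at h
  linarith [div_le_div₀ hN0 hN hZpos hZ]

lemma surjective_gibbsMean_anharmonicV (hκ0 : 0 < κ) (hκ1 : κ < 1) :
    Function.Surjective (gibbsMean (anharmonicV κ)) := by
  obtain ⟨C, hC⟩ := exists_sub_le_gibbsMean_anharmonicV hκ0 hκ1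
  refine (isConfining_anharmonicV hκ0.le hκ1).continuous_gibbsMean.surjective ?_ ?_
  · exact tendsto_atTop_mono' _ ((eventually_ge_atTop 0).mono hC)
      (tendsto_atTop_add_const_right _ (-C) tendsto_id)
  · exact tendsto_atBot_mono (fun τ => (mul_gibbsMean_anharmonicV_lt hκ0 hκ1 τ).2.le) tendsto_id

end Anharmonic

/-- for the potential `V(r) = (1/2)(1-κ)r² + (1/2)κ r |r|₊` with
`0 < κ < 1/3`, one has `τ̂(ρ) > (1-κ)ρ` and `τ̂(ρ) > ρ` for every `ρ`; equivalently,
with `ρ(τ) = G'(τ)` the mean of `r` under the Gibbs measure,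
`τ > (1-κ) ρ(τ)` and `τ > ρ(τ)` for every `τ`. -/
theorem tension_gt_linear_for_anharmonicV
    (κ : ℝ) (hκ0 : 0 < κ) (hκ1 : κ < 1/3) :
    (∀ ρ : ℝ, (1 - κ) * ρ < tension (anharmonicV κ) ρ ∧ ρ < tension (anharmonicV κ) ρ) ∧
    (∀ τ : ℝ, (1 - κ) * deriv (gibbsG (anharmonicV κ)) τ < τ ∧
      deriv (gibbsG (anharmonicV κ)) τ < τ) := by
  have hκ : κ < 1 := by linarith
  have hV := isConfining_anharmonicV hκ0.le hκ
  have hG τ : deriv (gibbsG (anharmonicV κ)) τ = gibbsMean (anharmonicV κ) τ :=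
    (hV.hasDerivAt_gibbsG τ).deriv
  refine ⟨fun ρ => ?_, fun τ => by simpa only [hG] using mul_gibbsMean_anharmonicV_lt hκ0 hκ τ⟩
  obtain ⟨τ, rfl⟩ := surjective_gibbsMean_anharmonicV hκ0 hκ ρ
  have hF : tension (anharmonicV κ) (gibbsMean (anharmonicV κ) τ) = τ :=
    (hasDerivAt_iSup_mul_sub hV.hasDerivAt_gibbsG hV.strictMono_gibbsMean
      (surjective_gibbsMean_anharmonicV hκ0 hκ) rfl).deriv
  rw [hF]
  exact mul_gibbsMean_anharmonicV_lt hκ0 hκ τ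
end

section
/- Let N, l ∈ ℕ with 1 ≤ l and 2l ≤ N, let u_1, …, u_N be real numbers, and let J : [0,1] → ℝ be continuously differentiable. Then |(1/N) Σ_{i=l}^{N−l+1} (1/l) Σ_{|j|<l} ((l−|j|)/l) (J(i/N) − J((i+j)/N)) u_i| ≤ ‖J'‖_∞ · (l/N) · ((1/N) Σ_{i=1}^N u_i²)^{1/2}. -/
/-!
By the mean value theorem `J` is `‖J'‖_∞`-Lipschitz on `[0, 1]`, so the `j`-th difference is at
most `‖J'‖_∞ |j| / N`. The triangle weight tames the factor `|j|`: `(l - |j|) |j| ≤ l² / 4`, so the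
average over the `2l - 1` shifts is at most `‖J'‖_∞ (l / N) |u_i|`. Summing over `i` leaves
`(1/N) Σ |u_i|`, which Cauchy–Schwarz bounds by the root mean square of `u`.
-/

open Finset Real

theorem abs_sub_le_iSup_abs_deriv_mul {J : ℝ → ℝ} (hJ : ContDiff ℝ 1 J) {s t a b : ℝ}
    (ha : a ∈ Set.Icc s t) (hb : b ∈ Set.Icc s t) :
    |J a - J b| ≤ (⨆ x : Set.Icc s t, |deriv J x|) * |a - b| := by
  have hbdd : BddAbove (Set.range fun x : Set.Icc s t => |deriv J x|) := by
    have h := (isCompact_Icc (a := s) (b := t)).bddAbove_image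
      (hJ.continuous_deriv le_rfl).abs.continuousOn
    rwa [Set.image_eq_range] at h
  exact (convex_Icc s t).norm_image_sub_le_of_norm_deriv_le
    (fun x _ => (hJ.differentiable one_ne_zero).differentiableAt)
    (fun x hx => le_ciSup hbdd (⟨x, hx⟩ : Set.Icc s t)) hb ha

theorem triangle_weight_mul_abs_le (l : ℕ) (j : ℤ) :
    ((((l : ℤ) - |j|) : ℤ) : ℝ) / l * |(j : ℝ)| ≤ l / 4 := by
  rcases Nat.eq_zero_or_pos l with rfl | hl
  · simp
  rw [div_mul_eq_mul_div, div_le_iff₀ (by positivity)]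
  push_cast
  nlinarith [sq_nonneg ((l : ℝ) - 2 * |(j : ℝ)|)]

theorem sum_triangle_weight_mul_abs_le (l : ℕ) :
    ∑ j ∈ Ioo (-(l : ℤ)) l, ((((l : ℤ) - |j|) : ℤ) : ℝ) / l * |(j : ℝ)| ≤ l ^ 2 := by
  have hcard : (#(Ioo (-(l : ℤ)) l) : ℝ) ≤ 2 * l := by
    rw [Int.card_Ioo]
    exact_mod_cast (by omega : (l - -(l : ℤ) - 1).toNat ≤ 2 * l)
  calc _ ≤ #(Ioo (-(l : ℤ)) l) • ((l : ℝ) / 4) :=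
        sum_le_card_nsmul _ _ _ fun j _ => triangle_weight_mul_abs_le l j
    _ ≤ 2 * l * (l / 4) := by rw [nsmul_eq_mul]; gcongr
    _ ≤ l ^ 2 := by nlinarith [sq_nonneg (l : ℝ)]

theorem sum_abs_div_card_le_sqrt {ι : Type*} (s : Finset ι) (f : ι → ℝ) :
    1 / #s * ∑ i ∈ s, |f i| ≤ √(1 / #s * ∑ i ∈ s, f i ^ 2) := by
  apply Real.le_sqrt_of_sq_le
  have h := sum_div_card_sq_le_sum_sq_div_card (s := s) (f := fun i => |f i|)
  simp only [sq_abs] at h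
  rwa [one_div_mul_eq_div, one_div_mul_eq_div]

theorem abs_sub_div_le_iSup_abs_deriv_mul {J : ℝ → ℝ} (hJ : ContDiff ℝ 1 J) {N : ℕ} {x y : ℝ}
    (hx : x ∈ Set.Icc 0 (N : ℝ)) (hy : y ∈ Set.Icc 0 (N : ℝ)) :
    |J (x / N) - J (y / N)| ≤ (⨆ t : Set.Icc (0 : ℝ) 1, |deriv J t|) * (|x - y| / N) := by
  have hmem : ∀ z ∈ Set.Icc 0 (N : ℝ), z / N ∈ Set.Icc (0 : ℝ) 1 := fun z hz =>
    ⟨div_nonneg hz.1 N.cast_nonneg, div_le_one_of_le₀ hz.2 N.cast_nonneg⟩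
  have h := abs_sub_le_iSup_abs_deriv_mul hJ (hmem x hx) (hmem y hy)
  rwa [← sub_div, abs_div, Nat.abs_cast] at h

theorem abs_triangle_smoothed_difference_le {J : ℝ → ℝ} (hJ : ContDiff ℝ 1 J) {N l i : ℕ}
    (hl : 1 ≤ l) (hlN : l ≤ N) (hi : i ∈ Icc l (N - l + 1)) (c : ℝ) :
    |(1 / (l : ℝ)) * ∑ j ∈ Ioo (-(l : ℤ)) l,
        ((((l : ℤ) - |j|) : ℤ) : ℝ) / l * (J ((i : ℝ) / N) - J (((i : ℝ) + j) / N)) * c|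
      ≤ (⨆ x : Set.Icc (0 : ℝ) 1, |deriv J x|) * (l / N) * |c| := by
  set M := ⨆ x : Set.Icc (0 : ℝ) 1, |deriv J x|
  rw [mem_Icc] at hi
  have hterm : ∀ j ∈ Ioo (-(l : ℤ)) l,
      |((((l : ℤ) - |j|) : ℤ) : ℝ) / l * (J ((i : ℝ) / N) - J (((i : ℝ) + j) / N)) * c|
        ≤ ((((l : ℤ) - |j|) : ℤ) : ℝ) / l * |(j : ℝ)| * (M / N * |c|) := by
    intro j hj
    rw [mem_Ioo] at hj
    have hjl : |j| < l := abs_lt.mpr hj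
    have hw : (0 : ℝ) ≤ ((((l : ℤ) - |j|) : ℤ) : ℝ) / l :=
      div_nonneg (by exact_mod_cast (by omega : (0 : ℤ) ≤ l - |j|)) l.cast_nonneg
    have hJij := abs_sub_div_le_iSup_abs_deriv_mul hJ (x := i) (y := i + j)
      ⟨i.cast_nonneg, by exact_mod_cast (by omega : i ≤ N)⟩
      ⟨by exact_mod_cast (by omega : (0 : ℤ) ≤ i + j),
        by exact_mod_cast (by omega : (i : ℤ) + j ≤ N)⟩
    rw [sub_add_cancel_left, abs_neg] at hJij
    rw [abs_mul, abs_mul, abs_of_nonneg hw]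
    calc _ ≤ ((((l : ℤ) - |j|) : ℤ) : ℝ) / l * (M * (|(j : ℝ)| / N)) * |c| := by gcongr
      _ = _ := by ring
  calc _ ≤ (1 / (l : ℝ)) * ∑ j ∈ Ioo (-(l : ℤ)) l,
          |((((l : ℤ) - |j|) : ℤ) : ℝ) / l * (J ((i : ℝ) / N) - J (((i : ℝ) + j) / N)) * c| := by
        rw [abs_mul, abs_of_nonneg (by positivity)]
        gcongr
        exact abs_sum_le_sum_abs _ _
    _ ≤ (1 / (l : ℝ)) * ∑ j ∈ Ioo (-(l : ℤ)) l,
          ((((l : ℤ) - |j|) : ℤ) : ℝ) / l * |(j : ℝ)| * (M / N * |c|) := by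
        gcongr with j hj
        exact hterm j hj
    _ ≤ (1 / (l : ℝ)) * l ^ 2 * (M / N * |c|) := by
        rw [← sum_mul, ← mul_assoc]
        have hM : 0 ≤ M := Real.iSup_nonneg fun _ => abs_nonneg _
        gcongr
        exact sum_triangle_weight_mul_abs_le l
    _ = M * (l / N) * |c| := by
        have : (l : ℝ) ≠ 0 := by positivity
        field_simp

/-- for `1 ≤ l`, `2l ≤ N`, real numbers `u_1, …, u_N` and a `C¹` test
function `J`,
`|(1/N) Σ_{i=l}^{N-l+1} (1/l) Σ_{|j|<l} ((l-|j|)/l)(J(i/N) - J((i+j)/N)) u_i|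
  ≤ ‖J'‖_∞ (l/N) ((1/N) Σ_{i=1}^N u_i²)^{1/2}`,
where `‖J'‖_∞ = sup_{x ∈ [0,1]} |J'(x)|`. -/
theorem smoothing_error_bound
    (N l : ℕ) (hl : 1 ≤ l) (hlN : 2 * l ≤ N)
    (u : ℕ → ℝ) (J : ℝ → ℝ) (hJ : ContDiff ℝ 1 J) :
    |(1 / (N : ℝ)) * ∑ i ∈ Finset.Icc l (N - l + 1),
        (1 / (l : ℝ)) * ∑ j ∈ Finset.Ioo (-(l : ℤ)) (l : ℤ),
          ((((l : ℤ) - |j|) : ℤ) : ℝ) / (l : ℝ)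
            * (J ((i : ℝ) / N) - J (((i : ℝ) + (j : ℝ)) / N)) * u i|
      ≤ (⨆ x : Set.Icc (0:ℝ) 1, |deriv J (x : ℝ)|) * ((l : ℝ) / N)
          * Real.sqrt ((1 / (N : ℝ)) * ∑ i ∈ Finset.Icc 1 N, (u i) ^ 2) := by
  set M := ⨆ x : Set.Icc (0 : ℝ) 1, |deriv J x|
  have hM : 0 ≤ M := Real.iSup_nonneg fun _ => abs_nonneg _
  have hcard : #(Icc 1 N) = N := by simp
  calc _ ≤ 1 / (N : ℝ) * ∑ i ∈ Icc l (N - l + 1), M * (l / N) * |u i| := by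
        rw [abs_mul, abs_of_nonneg (by positivity)]
        gcongr
        exact (abs_sum_le_sum_abs _ _).trans <| sum_le_sum fun i hi =>
          abs_triangle_smoothed_difference_le hJ hl (by omega) hi (u i)
    _ ≤ 1 / (N : ℝ) * ∑ i ∈ Icc 1 N, M * (l / N) * |u i| := by
        gcongr
        omega
    _ = M * (l / N) * (1 / #(Icc 1 N) * ∑ i ∈ Icc 1 N, |u i|) := by
        rw [hcard, ← mul_sum]
        ring
    _ ≤ M * (l / N) * √(1 / N * ∑ i ∈ Icc 1 N, u i ^ 2) := by
        grw [sum_abs_div_card_le_sqrt, hcard]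
end
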